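/- arXiv:2410.08714 — 12 statements merged into one kernel-verified Lean document; each statement's English description precedes it below -/
import Mathlib

section
/- For every vector d ∈ ℕ^{n−1} of nonnegative integers, Σ_{i=1}^{n} π(d + e_i) · σ_{≤i} · (1/i) = π(d). (This is the stationarity balance equation showing that π, the product of geometric distributions Geom(p_i), is a stationary distribution of the σ-MultiQueue deletion Markov chain.) -/
/-- **Stationarity balance equation for the σ-MultiQueue.**
`σ` is a probability distribution on `{1,…,n}` satisfying condition (☆),
`π` is the product of geometric distributions `Geom(p i)` on vectors of
nonnegative integers (only coordinates `1,…,n-1` are relevant), and `e i`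
is the `i`-th standard unit vector (with the convention `e n = 0`).
Then for every `d`, `∑_{i=1}^{n} π(d + e i) · σ_{≤i} · (1/i) = π(d)`. -/
theorem multiqueue_stationarity
    (n : ℕ) (hn : 1 ≤ n) (σ : ℕ → ℝ)
    (hσ0 : ∀ i ∈ Finset.Icc 1 n, 0 ≤ σ i)
    (hσ1 : ∑ i ∈ Finset.Icc 1 n, σ i = 1)
    (σle : ℕ → ℝ) (hσle : ∀ i, σle i = ∑ j ∈ Finset.Icc 1 i, σ j)
    (hstar : ∀ i ∈ Finset.Icc 1 (n - 1), (i : ℝ) / n < σle i)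
    (p : ℕ → ℝ) (hp : ∀ i, p i = 1 - (i : ℝ) / (n * σle i))
    (π : (ℕ → ℕ) → ℝ)
    (hπ : ∀ d : ℕ → ℕ, π d = ∏ i ∈ Finset.Icc 1 (n - 1), (1 - p i) ^ (d i) * p i)
    (e : ℕ → ℕ → ℕ)
    (he : ∀ i j, e i j = if j = i ∧ i ≤ n - 1 then 1 else 0)
    (d : ℕ → ℕ) :
    ∑ i ∈ Finset.Icc 1 n, π (fun j => d j + e i j) * σle i * (1 / (i : ℝ)) = π d := by
  have hn0 : (n : ℝ) ≠ 0 := Nat.cast_ne_zero.mpr (by omega)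
  have key : ∀ i ∈ Finset.Icc 1 n,
      π (fun j => d j + e i j) * σle i * (1 / (i : ℝ)) = π d / n := by
    intro i hi
    simp only [Finset.mem_Icc] at hi
    by_cases hin : i ≤ n - 1
    · have hσpos : (i : ℝ) / n < σle i := hstar i (Finset.mem_Icc.mpr ⟨hi.1, hin⟩)
      have hi0 : (0 : ℝ) < i := by exact_mod_cast hi.1
      have hnp : (0 : ℝ) < n := by positivity
      have hσp : 0 < σle i := lt_trans (by positivity) hσpos
      have hπ' : π (fun j => d j + e i j) = (1 - p i) * π d := by
        rw [hπ, hπ]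
        have hc : ∀ j ∈ Finset.Icc 1 (n - 1),
            (1 - p j) ^ (d j + e i j) * p j
              = (1 - p j) ^ (e i j) * ((1 - p j) ^ (d j) * p j) := by
          intro j _; rw [pow_add]; ring
        rw [Finset.prod_congr rfl hc, Finset.prod_mul_distrib]
        congr 1
        rw [Finset.prod_eq_single i]
        · rw [he]; simp [hin]
        · intro j hj hji; rw [he]; simp [hji]
        · intro h; exact absurd (Finset.mem_Icc.mpr ⟨hi.1, hin⟩) h
      have hp' : 1 - p i = (i : ℝ) / (n * σle i) := by rw [hp]; ring
      rw [hπ', hp']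
      field_simp
    · have hie : i = n := by omega
      have hnn : ¬ (n ≤ n - 1) := by omega
      have hde : (fun j => d j + e i j) = d := by
        funext j; rw [he, hie]; simp [hnn]
      have hσlen : σle i = 1 := by rw [hie, hσle]; exact hσ1
      rw [hde, hσlen, hie]
      ring
  rw [Finset.sum_congr rfl key, Finset.sum_const, Nat.card_Icc,
    show n + 1 - 1 = n from rfl, nsmul_eq_mul]
  field_simp
end

section
/- ν(d, i) = π(d) · σ_{≤i} for every vector d ∈ ℕ^{n−1} of nonnegative integers and every i ∈ {1, …, n}. (Interpretation: ν(d, i) is the probability that the transitional state (d, i) occurs when transitioning from a state distributed according to π.) -/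
/-!
Induct on `i`, and for fixed `i ≥ 2` on `d_{i-1}`. When `d_{i-1} = 0` the recurrence falls back
to level `i - 1` and `σ_{≤i} = σ_{≤i-1} + σ_i`. When `d_{i-1} > 0`, moving one unit from
coordinate `i - 1` to coordinate `i` multiplies the product-form weight `π` by
`(1 - p_i) / (1 - p_{i-1})`, and since `1 - p_j = j / (n σ_{≤j})` this factor is exactly
`(i σ_{≤i-1}) / ((i - 1) σ_{≤i})`, which cancels the factor `1 - 1/i` of the recurrence.
At `i = n` the convention `e_n = 0` matches `1 - p_n = 1`, which holds because `σ_{≤n} = 1`.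
-/

open Finset

theorem Finset.prod_pow_mul_of_eq_succ {ι R : Type*} [DecidableEq ι] [CommMonoid R]
    {s : Finset ι} {a : ι} (ha : a ∈ s) {r c : ι → R} {d d' : ι → ℕ}
    (hda : d a = d' a + 1) (hd : ∀ j ∈ s, j ≠ a → d j = d' j) :
    ∏ j ∈ s, r j ^ d j * c j = r a * ∏ j ∈ s, r j ^ d' j * c j := by
  rw [← mul_prod_erase s (fun j => r j ^ d j * c j) ha,
    ← mul_prod_erase s (fun j => r j ^ d' j * c j) ha,
    prod_congr rfl fun j hj => by rw [hd j (mem_of_mem_erase hj) (ne_of_mem_erase hj)],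
    hda, pow_succ]
  ac_rfl

def unitVec (n i : ℕ) : ℕ → ℕ := fun j => if j = i ∧ i ≤ n - 1 then 1 else 0

theorem prod_pow_mul_transfer {R : Type*} [CommMonoid R] {n i : ℕ} {r c : ℕ → R}
    (hrn : r n = 1) (hi : 2 ≤ i) (hin : i ≤ n) {d : ℕ → ℕ} (hd : 0 < d (i - 1)) :
    (∏ j ∈ Icc 1 (n - 1), r j ^ (d j - unitVec n (i - 1) j + unitVec n i j) * c j) * r (i - 1)
      = (∏ j ∈ Icc 1 (n - 1), r j ^ d j * c j) * r i := by
  set m : ℕ → ℕ := fun j => d j - unitVec n (i - 1) j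
  have hm : ∀ j, j ≠ i - 1 → m j = d j := fun j hj => by simp [m, unitVec, hj]
  have hd_m : ∏ j ∈ Icc 1 (n - 1), r j ^ d j * c j
      = r (i - 1) * ∏ j ∈ Icc 1 (n - 1), r j ^ m j * c j :=
    prod_pow_mul_of_eq_succ (mem_Icc.mpr ⟨by omega, by omega⟩)
      (by simp [m, unitVec, show i - 1 ≤ n - 1 by omega]; omega) fun j _ hj => (hm j hj).symm
  have hshift_m : ∏ j ∈ Icc 1 (n - 1), r j ^ (m j + unitVec n i j) * c j
      = r i * ∏ j ∈ Icc 1 (n - 1), r j ^ m j * c j := by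
    by_cases hi' : i ≤ n - 1
    · exact prod_pow_mul_of_eq_succ (mem_Icc.mpr ⟨by omega, hi'⟩)
        (by simp [unitVec, hi']) fun j _ hj => by simp [unitVec, hj]
    · have hzero : ∀ j, unitVec n i j = 0 := fun j => by simp [unitVec, hi']
      simp only [hzero, add_zero]
      rw [show i = n by omega, hrn, one_mul]
  rw [hshift_m, hd_m]
  ac_rfl

theorem prod_geom_transfer {n i : ℕ} {S p : ℕ → ℝ} (hq : ∀ j, 1 - p j = j / (n * S j))
    (hSn : S n = 1) (hS : ∀ j, 1 ≤ j → j ≤ n → S j ≠ 0) (hi : 2 ≤ i) (hin : i ≤ n)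
    {d : ℕ → ℕ} (hd : 0 < d (i - 1)) :
    (∏ j ∈ Icc 1 (n - 1), (1 - p j) ^ (d j - unitVec n (i - 1) j + unitVec n i j) * p j)
        * S i * (1 - 1 / (i : ℝ))
      = (∏ j ∈ Icc 1 (n - 1), (1 - p j) ^ d j * p j) * S (i - 1) := by
  have hn : (n : ℝ) ≠ 0 := by exact_mod_cast (show n ≠ 0 by omega)
  have h := prod_pow_mul_transfer (r := fun j => 1 - p j) (c := p)
    (by simp only [hq, hSn, mul_one, div_self hn]) hi hin hd
  rw [hq, hq, Nat.cast_sub (by omega)] at h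
  have := hS i (by omega) hin
  have := hS (i - 1) (by omega) (by omega)
  field_simp at h ⊢
  linear_combination h

theorem eq_mul_of_recurrence {n : ℕ} {σ S : ℕ → ℝ} {π : (ℕ → ℕ) → ℝ}
    {T : ℕ → (ℕ → ℕ) → ℕ → ℕ} {ν : (ℕ → ℕ) → ℕ → ℝ}
    (hS0 : S 0 = 0) (hS : ∀ i, S (i + 1) = S i + σ (i + 1))
    (hT : ∀ i d, 2 ≤ i → i ≤ n → T i d (i - 1) = d (i - 1) - 1)
    (hπT : ∀ i d, 2 ≤ i → i ≤ n → 0 < d (i - 1) →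
      π (T i d) * S i * (1 - 1 / (i : ℝ)) = π d * S (i - 1))
    (hν1 : ∀ d, ν d 1 = π d * σ 1)
    (hνpos : ∀ d i, 2 ≤ i → i ≤ n → 0 < d (i - 1) →
      ν d i = π d * σ i + ν (T i d) i * (1 - 1 / (i : ℝ)))
    (hνzero : ∀ d i, 2 ≤ i → i ≤ n → d (i - 1) = 0 →
      ν d i = π d * σ i + ν d (i - 1)) :
    ∀ i, 1 ≤ i → i ≤ n → ∀ d, ν d i = π d * S i := by
  intro i hi1 hin
  induction i, hi1 using Nat.le_induction with
  | base => intro d; rw [hν1, hS, hS0, zero_add]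
  | succ i hi1 ih =>
    suffices ∀ k d, d i = k → ν d (i + 1) = π d * S (i + 1) from fun d => this _ d rfl
    intro k
    induction k with
    | zero =>
      intro d hd
      rw [hνzero d (i + 1) (by omega) hin hd, Nat.add_sub_cancel, ih (by omega), hS]
      ring
    | succ k ihk =>
      intro d hd
      have hpos : 0 < d (i + 1 - 1) := by simp [hd]
      rw [hνpos d (i + 1) (by omega) hin hpos,
        ihk _ (by simpa [hd] using hT (i + 1) d (by omega) hin),
        mul_assoc, ← mul_assoc, hπT (i + 1) d (by omega) hin hpos, Nat.add_sub_cancel, hS]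
      ring

theorem multiqueue_transitional_state_probability_general
    (n : ℕ) (σ : ℕ → ℝ)
    (hσ1 : ∑ i ∈ Finset.Icc 1 n, σ i = 1)
    (σle : ℕ → ℝ) (hσle : ∀ i, σle i = ∑ j ∈ Finset.Icc 1 i, σ j)
    (hstar : ∀ i ∈ Finset.Icc 1 (n - 1), (i : ℝ) / n < σle i)
    (p : ℕ → ℝ) (hp : ∀ i, p i = 1 - (i : ℝ) / (n * σle i))
    (π : (ℕ → ℕ) → ℝ)
    (hπ : ∀ d : ℕ → ℕ, π d = ∏ i ∈ Finset.Icc 1 (n - 1), (1 - p i) ^ (d i) * p i)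
    (e : ℕ → ℕ → ℕ)
    (he : ∀ i j, e i j = if j = i ∧ i ≤ n - 1 then 1 else 0)
    (ν : (ℕ → ℕ) → ℕ → ℝ)
    (hν1 : ∀ d : ℕ → ℕ, ν d 1 = π d * σ 1)
    (hνpos : ∀ d : ℕ → ℕ, ∀ i, 2 ≤ i → i ≤ n → 0 < d (i - 1) →
      ν d i = π d * σ i + ν (fun j => d j - e (i - 1) j + e i j) i * (1 - 1 / (i : ℝ)))
    (hνzero : ∀ d : ℕ → ℕ, ∀ i, 2 ≤ i → i ≤ n → d (i - 1) = 0 →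
      ν d i = π d * σ i + ν d (i - 1))
    (d : ℕ → ℕ) (i : ℕ) (hi : i ∈ Finset.Icc 1 n) :
    ν d i = π d * σle i := by
  obtain ⟨hi1, hin⟩ := mem_Icc.mp hi
  obtain rfl : e = unitVec n := funext₂ he
  have hσle_n : σle n = 1 := (hσle n).trans hσ1
  have hσle_ne : ∀ j, 1 ≤ j → j ≤ n → σle j ≠ 0 := by
    intro j hj1 hjn
    rcases (show j ≤ n - 1 ∨ j = n by omega) with hj | rfl
    · have : (0 : ℝ) < j / n := div_pos (by exact_mod_cast hj1) (by exact_mod_cast (by omega))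
      exact (this.trans (hstar j (mem_Icc.mpr ⟨hj1, hj⟩))).ne'
    · simp [hσle_n]
  have hq : ∀ j, 1 - p j = j / (n * σle j) := fun j => by rw [hp]; ring
  have hσle_succ : ∀ j, σle (j + 1) = σle j + σ (j + 1) := fun j => by
    rw [hσle, hσle, sum_Icc_succ_top (by omega)]
  have hshift : ∀ i (d : ℕ → ℕ), 2 ≤ i → i ≤ n →
      d (i - 1) - unitVec n (i - 1) (i - 1) + unitVec n i (i - 1) = d (i - 1) - 1 :=
    fun i d hi2 hin => by simp [unitVec, show i - 1 ≤ n - 1 by omega, show i - 1 ≠ i by omega]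
  exact eq_mul_of_recurrence (by simp [hσle]) hσle_succ hshift
    (fun i d hi2 hin hd => by
      simpa only [hπ] using prod_geom_transfer hq hσle_n hσle_ne hi2 hin hd)
    hν1 hνpos hνzero i hi1 hin d

/-- **Probability of transitional states (Lemma 7).**
`ν(d, i)` is the probability that the transitional state `(d, i)` occurs when
transitioning from a state distributed according to `π` (the product of
geometric distributions); it satisfies the recurrence below, and the claim is
`ν(d, i) = π(d) · σ_{≤i}` for all `d ∈ ℕ^{n-1}` and `i ∈ {1,…,n}`. -/
theorem multiqueue_transitional_state_probability
    (n : ℕ) (hn : 1 ≤ n) (σ : ℕ → ℝ)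
    (hσ0 : ∀ i ∈ Finset.Icc 1 n, 0 ≤ σ i)
    (hσ1 : ∑ i ∈ Finset.Icc 1 n, σ i = 1)
    (σle : ℕ → ℝ) (hσle : ∀ i, σle i = ∑ j ∈ Finset.Icc 1 i, σ j)
    (hstar : ∀ i ∈ Finset.Icc 1 (n - 1), (i : ℝ) / n < σle i)
    (p : ℕ → ℝ) (hp : ∀ i, p i = 1 - (i : ℝ) / (n * σle i))
    (π : (ℕ → ℕ) → ℝ)
    (hπ : ∀ d : ℕ → ℕ, π d = ∏ i ∈ Finset.Icc 1 (n - 1), (1 - p i) ^ (d i) * p i)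
    (e : ℕ → ℕ → ℕ)
    (he : ∀ i j, e i j = if j = i ∧ i ≤ n - 1 then 1 else 0)
    (ν : (ℕ → ℕ) → ℕ → ℝ)
    (hν1 : ∀ d : ℕ → ℕ, ν d 1 = π d * σ 1)
    (hνpos : ∀ d : ℕ → ℕ, ∀ i, 2 ≤ i → i ≤ n → 0 < d (i - 1) →
      ν d i = π d * σ i + ν (fun j => d j - e (i - 1) j + e i j) i * (1 - 1 / (i : ℝ)))
    (hνzero : ∀ d : ℕ → ℕ, ∀ i, 2 ≤ i → i ≤ n → d (i - 1) = 0 →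
      ν d i = π d * σ i + ν d (i - 1))
    (d : ℕ → ℕ) (i : ℕ) (hi : i ∈ Finset.Icc 1 n) :
    ν d i = π d * σle i :=
  multiqueue_transitional_state_probability_general n σ hσ1 σle hσle hstar p hp π hπ e he ν hν1
    hνpos hνzero d i hi
end

section
/- For every natural number n ≥ 1, setting s_i = 1 − (1 − i/n)² for i ∈ {1, …, n−1}, one has Σ_{i=1}^{n−1} s_i·(1−s_i)/(s_i − i/n) = (5/6)·n − 1 + 1/(6n). (This is the long-run expected rank error of the 2-MultiQueue with n queues.) -/
lemma sum_range_id_real (n : ℕ) :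
    ∑ i ∈ Finset.range n, (i : ℝ) = n * (n - 1) / 2 := by
  induction n with
  | zero => simp
  | succ m ih => rw [Finset.sum_range_succ, ih]; push_cast; ring

lemma sum_range_sq_real (n : ℕ) :
    ∑ i ∈ Finset.range n, (i : ℝ) ^ 2 = n * (n - 1) * (2 * n - 1) / 6 := by
  induction n with
  | zero => simp
  | succ m ih => rw [Finset.sum_range_succ, ih]; push_cast; ring

/-- **Expected rank error of the 2-MultiQueue (Theorem 3 (i)).**
With `s i = 1 - (1 - i/n)²` (the value of `σ_{≤i}` for the 2-MultiQueue),
`∑_{i=1}^{n-1} s i (1 - s i)/(s i - i/n) = (5/6)n - 1 + 1/(6n)`. -/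
theorem two_multiqueue_expected_rank_error (n : ℕ) (hn : 1 ≤ n)
    (s : ℕ → ℝ) (hs : ∀ i, s i = 1 - (1 - (i : ℝ) / n) ^ 2) :
    ∑ i ∈ Finset.Icc 1 (n - 1), s i * (1 - s i) / (s i - (i : ℝ) / n)
      = 5 / 6 * n - 1 + 1 / (6 * n) := by
  have hn0 : (n : ℝ) ≠ 0 := by positivity
  have hstep : ∑ i ∈ Finset.Icc 1 (n - 1), s i * (1 - s i) / (s i - (i : ℝ) / n)
      = ∑ i ∈ Finset.Icc 1 (n - 1), (2 - 3 * ((i : ℝ) / n) + ((i : ℝ) / n) ^ 2) := by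
    refine Finset.sum_congr rfl fun i hi => ?_
    simp only [Finset.mem_Icc] at hi
    have hi1 : 1 ≤ i := hi.1
    have hi2 : i < n := Nat.lt_of_le_of_lt (hi.2) (Nat.sub_lt hn one_pos)
    set x : ℝ := (i : ℝ) / n with hx
    have hx0 : x ≠ 0 := by
      have : (0 : ℝ) < (i : ℝ) / n := by
        apply div_pos <;> [exact_mod_cast hi1; exact_mod_cast hn]
      exact ne_of_gt this
    have hx1 : 1 - x ≠ 0 := by
      have : (i : ℝ) / n < 1 := by
        rw [div_lt_one (by exact_mod_cast hn)]
        exact_mod_cast hi2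
      rw [hx]; intro h; nlinarith
    rw [hs i, ← hx]
    have hden : 1 - (1 - x) ^ 2 - x = x * (1 - x) := by ring
    rw [hden]
    field_simp
    ring
  rw [hstep]
  have hIcc : Finset.Icc 1 (n - 1) = Finset.Ico 1 n := by
    ext x
    simp only [Finset.mem_Icc, Finset.mem_Ico]
    omega
  rw [hIcc]
  have hsplit : ∑ i ∈ Finset.Ico 0 n, (2 - 3 * ((i : ℝ) / n) + ((i : ℝ) / n) ^ 2)
      = (2 - 3 * ((0 : ℕ) / (n : ℝ)) + (((0:ℕ) : ℝ) / n) ^ 2)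
        + ∑ i ∈ Finset.Ico 1 n, (2 - 3 * ((i : ℝ) / n) + ((i : ℝ) / n) ^ 2) := by
    exact Finset.sum_eq_sum_Ico_succ_bot hn (fun i => 2 - 3 * ((i : ℝ) / n) + ((i : ℝ) / n) ^ 2)
  have hrange : ∑ i ∈ Finset.Ico 0 n, (2 - 3 * ((i : ℝ) / n) + ((i : ℝ) / n) ^ 2)
      = ∑ i ∈ Finset.range n, (2 - 3 * ((i : ℝ) / n) + ((i : ℝ) / n) ^ 2) := by
    rw [Finset.range_eq_Ico]
  have hsum : ∑ i ∈ Finset.range n, (2 - 3 * ((i : ℝ) / n) + ((i : ℝ) / n) ^ 2)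
      = 2 * n - (3 / n) * (n * (n - 1) / 2) + (1 / (n : ℝ) ^ 2) * (n * (n - 1) * (2 * n - 1) / 6) := by
    rw [Finset.sum_add_distrib, Finset.sum_sub_distrib]
    rw [Finset.sum_const, Finset.card_range]
    have h1 : ∑ i ∈ Finset.range n, 3 * ((i : ℝ) / n) = (3 / n) * ∑ i ∈ Finset.range n, (i : ℝ) := by
      rw [Finset.mul_sum]; refine Finset.sum_congr rfl fun i _ => ?_; field_simp
    have h2 : ∑ i ∈ Finset.range n, ((i : ℝ) / n) ^ 2
        = (1 / (n : ℝ) ^ 2) * ∑ i ∈ Finset.range n, (i : ℝ) ^ 2 := by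
      rw [Finset.mul_sum]; refine Finset.sum_congr rfl fun i _ => ?_; field_simp
    rw [h1, h2, sum_range_id_real, sum_range_sq_real]
    ring
  have : ∑ i ∈ Finset.Ico 1 n, (2 - 3 * ((i : ℝ) / n) + ((i : ℝ) / n) ^ 2)
      = (2 * n - (3 / n) * (n * (n - 1) / 2) + (1 / (n : ℝ) ^ 2) * (n * (n - 1) * (2 * n - 1) / 6)) - 2 := by
    have := hsplit
    rw [hrange, hsum] at this
    norm_num at this
    simp only [one_div] at this ⊢
    linarith
  rw [this]
  field_simp
  ring
end

section
/- For every natural number n ≥ 1 and every real ε ∈ (0,1), setting s_i = 1 − (1 − i/n)·(1 − ε·i/n) for i ∈ {1, …, n−1}, one has Σ_{i=1}^{n−1} s_i·(1−s_i)/(s_i − i/n) = (1/ε − ε/6)·n − 1/ε + ε/(6n). (This is the long-run expected rank error of the (1+ε)-MultiQueue with n queues.) -/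
lemma sum_icc_id_real (m : ℕ) : ∑ i ∈ Finset.Icc 1 m, (i : ℝ) = m * (m + 1) / 2 := by
  induction m with
  | zero => simp
  | succ k ih =>
      rw [Finset.sum_Icc_succ_top (by omega), ih]
      push_cast; ring

lemma sum_icc_sq_real (m : ℕ) :
    ∑ i ∈ Finset.Icc 1 m, (i : ℝ) ^ 2 = m * (m + 1) * (2 * m + 1) / 6 := by
  induction m with
  | zero => simp
  | succ k ih =>
      rw [Finset.sum_Icc_succ_top (by omega), ih]
      push_cast; ring

/-- **Expected rank error of the (1+ε)-MultiQueue (Theorem 3 (ii)).**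
With `s i = 1 - (1 - i/n)(1 - ε·i/n)` (the value of `σ_{≤i}` for the
`(1+ε)`-MultiQueue), one has
`∑_{i=1}^{n-1} s i (1 - s i)/(s i - i/n) = (1/ε - ε/6)n - 1/ε + ε/(6n)`. -/
theorem one_plus_eps_multiqueue_expected_rank_error (n : ℕ) (hn : 1 ≤ n)
    (ε : ℝ) (hε : ε ∈ Set.Ioo (0 : ℝ) 1)
    (s : ℕ → ℝ) (hs : ∀ i, s i = 1 - (1 - (i : ℝ) / n) * (1 - ε * i / n)) :
    ∑ i ∈ Finset.Icc 1 (n - 1), s i * (1 - s i) / (s i - (i : ℝ) / n)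
      = (1 / ε - ε / 6) * n - 1 / ε + ε / (6 * n) := by
  obtain ⟨hε0, hε1⟩ := hε
  have hnpos : (0 : ℝ) < n := by exact_mod_cast Nat.lt_of_lt_of_le Nat.zero_lt_one hn
  have hn0 : (n : ℝ) ≠ 0 := ne_of_gt hnpos
  have key : ∀ i ∈ Finset.Icc 1 (n - 1),
      s i * (1 - s i) / (s i - (i : ℝ) / n)
        = (1 + ε) / ε - ((2 + ε) / n) * (i : ℝ) + (ε / (n : ℝ) ^ 2) * (i : ℝ) ^ 2 := by
    intro i hi
    rw [Finset.mem_Icc] at hi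
    have h1 : (1 : ℝ) ≤ (i : ℝ) := by exact_mod_cast hi.1
    have h2 : (i : ℝ) < n := by
      have : i < n := by omega
      exact_mod_cast this
    have hxpos : 0 < (i : ℝ) / n := div_pos (lt_of_lt_of_le one_pos h1) hnpos
    have hxlt : (i : ℝ) / n < 1 := (div_lt_one hnpos).2 h2
    have hden : s i - (i : ℝ) / n = ε * ((i : ℝ) / n) * (1 - (i : ℝ) / n) := by
      rw [hs]; ring
    have hne : ε * ((i : ℝ) / n) * (1 - (i : ℝ) / n) ≠ 0 :=
      ne_of_gt (mul_pos (mul_pos hε0 hxpos) (by linarith))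
    rw [hden, hs, div_eq_iff hne]
    field_simp
    ring
  rw [Finset.sum_congr rfl key, Finset.sum_add_distrib, Finset.sum_sub_distrib,
    ← Finset.mul_sum, ← Finset.mul_sum, Finset.sum_const, sum_icc_id_real, sum_icc_sq_real,
    Nat.card_Icc]
  have hcard : n - 1 + 1 - 1 = n - 1 := by omega
  rw [hcard]
  have hm : ((n - 1 : ℕ) : ℝ) = (n : ℝ) - 1 := by
    push_cast [Nat.cast_sub hn]; ring
  rw [nsmul_eq_mul, hm]
  field_simp
  ring
end

section
/- For every x ∈ (0,1), every natural number k ≥ 1 and every ε ∈ [0,1) with (k ≥ 2 or ε > 0), one has (1 − x^k·(1−ε+εx)) / (1 − x^{k−1}·(1−ε+εx)) = 1 + (1−ε+εx) / (Σ_{j=1}^{k−1} x^{−j} + ε), where the sum is empty (equal to 0) for k = 1. In particular the left-hand side has a removable singularity at x = 1 with limit 1 + 1/(k−1+ε). -/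
open Filter

lemma aux_sum (x : ℝ) (hx : x ≠ 0) (m : ℕ) :
    (∑ j ∈ Finset.Icc 1 m, x ^ (-(j : ℤ))) * x ^ m = ∑ i ∈ Finset.range m, x ^ i := by
  induction m with
  | zero => simp
  | succ n ih =>
    have h1 : x ^ (-((n+1 : ℕ) : ℤ)) * x ^ (n+1) = 1 := by
      rw [zpow_neg, zpow_natCast, inv_mul_cancel₀ (pow_ne_zero _ hx)]
    rw [Finset.sum_Icc_succ_top (by omega), geom_sum_succ, add_mul, pow_succ,
      ← mul_assoc, mul_comm _ x, ih, ← pow_succ, h1]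


/-- **Rearranging the fractional factor `g_c` (Equation (1)).**
For `x ∈ (0,1)`, `k ≥ 1`, `ε ∈ [0,1)` with `k ≥ 2` or `ε > 0`,
`(1 - x^k(1-ε+εx))/(1 - x^{k-1}(1-ε+εx)) = 1 + (1-ε+εx)/(∑_{j=1}^{k-1} x^{-j} + ε)`
(the sum being empty for `k = 1`); in particular the left-hand side has a
removable singularity at `x = 1` with limit `1 + 1/(k-1+ε)`. -/
theorem g_c_rearranged (k : ℕ) (hk : 1 ≤ k) (ε : ℝ) (hε : ε ∈ Set.Ico (0 : ℝ) 1)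
    (hkε : 2 ≤ k ∨ 0 < ε) :
    (∀ x ∈ Set.Ioo (0 : ℝ) 1,
      (1 - x ^ k * (1 - ε + ε * x)) / (1 - x ^ (k - 1) * (1 - ε + ε * x))
        = 1 + (1 - ε + ε * x) / ((∑ j ∈ Finset.Icc 1 (k - 1), x ^ (-(j : ℤ))) + ε)) ∧
    Tendsto (fun x : ℝ =>
        (1 - x ^ k * (1 - ε + ε * x)) / (1 - x ^ (k - 1) * (1 - ε + ε * x)))
      (nhdsWithin 1 (Set.Ioo (0 : ℝ) 1)) (nhds (1 + 1 / ((k : ℝ) - 1 + ε))) := by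
  obtain ⟨hε0, hε1⟩ := hε
  have key : ∀ x ∈ Set.Ioo (0 : ℝ) 1,
      (1 - x ^ k * (1 - ε + ε * x)) / (1 - x ^ (k - 1) * (1 - ε + ε * x))
        = 1 + (1 - ε + ε * x) / ((∑ j ∈ Finset.Icc 1 (k - 1), x ^ (-(j : ℤ))) + ε) := by
    intro x ⟨hx0, hx1⟩
    set a : ℝ := 1 - ε + ε * x with ha
    set S : ℝ := ∑ j ∈ Finset.Icc 1 (k - 1), x ^ (-(j : ℤ)) with hS
    set D : ℝ := (∑ i ∈ Finset.range (k - 1), x ^ i) + ε * x ^ (k - 1) with hDdef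
    have hxk : x ^ k = x ^ (k - 1) * x := by
      rw [← pow_succ, Nat.sub_add_cancel hk]
    have hgeom : (∑ i ∈ Finset.range (k - 1), x ^ i) * (x - 1) = x ^ (k - 1) - 1 :=
      geom_sum_mul x (k - 1)
    have hDen : 1 - x ^ (k - 1) * a = (1 - x) * D := by
      rw [ha, hDdef]
      nlinarith [hgeom]
    have hNum : 1 - x ^ k * a = (1 - x) * (D + x ^ (k - 1) * a) := by
      rw [hxk]
      nlinarith [hDen]
    have hD : 0 < D := by
      rcases hkε with h2 | hεpos
      · have hs : 0 < ∑ i ∈ Finset.range (k - 1), x ^ i :=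
          Finset.sum_pos (fun i _ => pow_pos hx0 i) (by simp; omega)
        have : 0 ≤ ε * x ^ (k - 1) := mul_nonneg hε0 (pow_pos hx0 _).le
        linarith
      · have hs : 0 ≤ ∑ i ∈ Finset.range (k - 1), x ^ i :=
          Finset.sum_nonneg fun i _ => (pow_pos hx0 i).le
        have : 0 < ε * x ^ (k - 1) := mul_pos hεpos (pow_pos hx0 _)
        linarith
    have hSum : (S + ε) * x ^ (k - 1) = D := by
      rw [hS, hDdef, add_mul, aux_sum x hx0.ne' (k - 1)]
    have hSpos : 0 < S + ε := by
      have := pow_pos hx0 (k - 1)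
      nlinarith [hSum]
    have h1x : (1 : ℝ) - x ≠ 0 := by linarith
    rw [hNum, hDen, mul_div_mul_left _ _ h1x]
    field_simp
    linear_combination a * hSum
  refine ⟨key, ?_⟩
  have hden : (0 : ℝ) < (k : ℝ) - 1 + ε := by
    rcases hkε with h2 | hεpos
    · have : (2 : ℝ) ≤ (k : ℝ) := by exact_mod_cast h2
      linarith
    · have : (1 : ℝ) ≤ (k : ℝ) := by exact_mod_cast hk
      linarith
  have hScont : Tendsto (fun x : ℝ => ∑ j ∈ Finset.Icc 1 (k - 1), x ^ (-(j : ℤ)))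
      (nhds 1) (nhds ((k : ℝ) - 1)) := by
    have hval : ((k : ℝ) - 1) = ∑ j ∈ Finset.Icc 1 (k - 1), (1 : ℝ) ^ (-(j : ℤ)) := by
      simp [Nat.card_Icc]
      rw [Nat.cast_sub hk]
      simp
    rw [hval]
    exact tendsto_finset_sum _ fun j _ =>
      ((continuousAt_zpow₀ (1 : ℝ) (-(j : ℤ)) (Or.inl one_ne_zero)))
  have hT : Tendsto (fun x : ℝ =>
      1 + (1 - ε + ε * x) / ((∑ j ∈ Finset.Icc 1 (k - 1), x ^ (-(j : ℤ))) + ε))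
      (nhds 1) (nhds (1 + 1 / ((k : ℝ) - 1 + ε))) := by
    have hnum : Tendsto (fun x : ℝ => 1 - ε + ε * x) (nhds 1) (nhds 1) := by
      have hcont : Continuous (fun x : ℝ => 1 - ε + ε * x) := continuous_const.add (continuous_const.mul continuous_id)
      have h := hcont.tendsto (1 : ℝ)
      simpa using h
    exact tendsto_const_nhds.add (hnum.div (hScont.add tendsto_const_nhds) hden.ne')
  refine (hT.mono_left nhdsWithin_le_nhds).congr' ?_
  exact Filter.eventuallyEq_of_mem self_mem_nhdsWithin fun x hx => (key x hx).symm
end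

section
/- For every real c > 1, the function f_c is strictly increasing on the interval (0,1). -/
/-- **`f_c` is strictly increasing on `(0,1)` (from the proof of Theorem 3).**
For real `c > 1` with `k = ⌊c⌋` and `ε = c - k`, the rank-error summand
`f_c(x) = x^{k-1}(1-ε+εx)·(1 - x^k(1-ε+εx))/(1 - x^{k-1}(1-ε+εx))`
is strictly increasing on the interval `(0,1)`. -/
theorem f_c_strictMonoOn (c : ℝ) (hc : 1 < c) (k : ℕ) (hk : k = ⌊c⌋₊)
    (ε : ℝ) (hε : ε = c - k) (f : ℝ → ℝ)
    (hf : ∀ x : ℝ, f x = x ^ (k - 1) * (1 - ε + ε * x) *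
      ((1 - x ^ k * (1 - ε + ε * x)) / (1 - x ^ (k - 1) * (1 - ε + ε * x)))) :
    StrictMonoOn f (Set.Ioo (0 : ℝ) 1) := by
  have hc0 : (0:ℝ) ≤ c := by linarith
  have hk1 : 1 ≤ k := by
    rw [hk]
    rw [Nat.le_floor_iff hc0]
    push_cast; linarith
  have hε0 : 0 ≤ ε := by
    have := Nat.floor_le hc0
    rw [hε, hk]; linarith
  have hε1 : ε < 1 := by
    have := Nat.lt_floor_add_one c
    rw [hε, hk]; push_cast; linarith
  obtain ⟨m, rfl⟩ : ∃ m, k = m + 1 := ⟨k - 1, (Nat.succ_pred_eq_of_pos hk1).symm⟩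
  have hm0 : m = 0 → 0 < ε := by
    intro h
    subst h
    rw [hε]
    push_cast
    linarith
  set a : ℝ → ℝ := fun z => 1 - ε + ε * z with ha
  set Q : ℝ → ℝ := fun z => (∑ i ∈ Finset.range m, z ^ i) + ε * z ^ m with hQ
  clear_value a Q
  have hapos : ∀ z ∈ Set.Ioo (0:ℝ) 1, 0 < a z := by
    intro z hz
    simp only [ha]
    nlinarith [hz.1, hz.2]
  have hamono : ∀ x ∈ Set.Ioo (0:ℝ) 1, ∀ y ∈ Set.Ioo (0:ℝ) 1, x ≤ y → a x ≤ a y := by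
    intro x hx y hy hxy
    simp only [ha]
    nlinarith
  have hQpos : ∀ z ∈ Set.Ioo (0:ℝ) 1, 0 < Q z := by
    intro z hz
    simp only [hQ]
    rcases Nat.eq_zero_or_pos m with hm | hm
    · subst hm
      simpa using hm0 rfl
    · have h1 : 0 < ∑ i ∈ Finset.range m, z ^ i :=
        Finset.sum_pos (fun i _ => pow_pos hz.1 i) (Finset.nonempty_range_iff.mpr (by omega))
      have h2 : 0 ≤ ε * z ^ m := mul_nonneg hε0 (pow_nonneg hz.1.le m)
      linarith
  have hfz : ∀ z ∈ Set.Ioo (0:ℝ) 1, f z = z ^ m * a z / Q z + z ^ (m+1) * a z := by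
    intro z hz
    obtain ⟨hz0, hz1⟩ := hz
    have hz1' : (1:ℝ) - z ≠ 0 := by linarith
    have hg := geom_sum_mul z m
    have hiden : 1 - z ^ m * (1 - ε + ε * z) = (1 - z) * Q z := by
      simp only [hQ]
      linear_combination hg
    have hinum : 1 - z ^ (m+1) * (1 - ε + ε * z) = (1 - z) * (1 + z * Q z) := by
      linear_combination z * hiden
    have hQne : Q z ≠ 0 := (hQpos z ⟨hz0, hz1⟩).ne'
    rw [hf z]
    simp only [Nat.add_sub_cancel]
    rw [hinum, hiden, mul_div_mul_left _ _ hz1']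
    simp only [ha]
    field_simp
    ring
  intro x hx y hy hxy
  rw [hfz x hx, hfz y hy]
  obtain ⟨hx0, hx1⟩ := hx
  obtain ⟨hy0, hy1⟩ := hy
  have haxy : a x ≤ a y := hamono x ⟨hx0, hx1⟩ y ⟨hy0, hy1⟩ hxy.le
  have t2 : x ^ (m+1) * a x < y ^ (m+1) * a y := by
    have h1 : x ^ (m+1) < y ^ (m+1) := pow_lt_pow_left₀ hxy hx0.le (Nat.succ_ne_zero m)
    nlinarith [hapos x ⟨hx0, hx1⟩, pow_pos hy0 (m+1)]
  have t1 : x ^ m * a x / Q x ≤ y ^ m * a y / Q y := by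
    rw [div_le_div_iff₀ (hQpos x ⟨hx0, hx1⟩) (hQpos y ⟨hy0, hy1⟩)]
    have hterm : ∀ i ∈ Finset.range m, x ^ m * a x * y ^ i ≤ y ^ m * a y * x ^ i := by
      intro i hi
      have him : i ≤ m := (Finset.mem_range.mp hi).le
      have h1 : x ^ m * y ^ i ≤ y ^ m * x ^ i := by
        have hsx : x ^ m = x ^ i * x ^ (m - i) := by rw [← pow_add, Nat.add_sub_cancel' him]
        have hsy : y ^ m = y ^ i * y ^ (m - i) := by rw [← pow_add, Nat.add_sub_cancel' him]
        have h2 : x ^ (m - i) ≤ y ^ (m - i) := pow_le_pow_left₀ hx0.le hxy.le _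
        calc x ^ m * y ^ i = x ^ i * y ^ i * x ^ (m - i) := by rw [hsx]; ring
          _ ≤ x ^ i * y ^ i * y ^ (m - i) := by
              have hnn : 0 ≤ x ^ i * y ^ i :=
                mul_nonneg (pow_nonneg hx0.le i) (pow_nonneg hy0.le i)
              exact mul_le_mul_of_nonneg_left h2 hnn
          _ = y ^ m * x ^ i := by rw [hsy]; ring
      calc x ^ m * a x * y ^ i = a x * (x ^ m * y ^ i) := by ring
        _ ≤ a x * (y ^ m * x ^ i) := mul_le_mul_of_nonneg_left h1 (hapos x ⟨hx0, hx1⟩).le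
        _ ≤ a y * (y ^ m * x ^ i) := by
            have hnn : 0 ≤ y ^ m * x ^ i :=
              mul_nonneg (pow_nonneg hy0.le m) (pow_nonneg hx0.le i)
            exact mul_le_mul_of_nonneg_right haxy hnn
        _ = y ^ m * a y * x ^ i := by ring
    have hsum : ∑ i ∈ Finset.range m, x ^ m * a x * y ^ i ≤
        ∑ i ∈ Finset.range m, y ^ m * a y * x ^ i := Finset.sum_le_sum hterm
    have heps : x ^ m * a x * (ε * y ^ m) ≤ y ^ m * a y * (ε * x ^ m) := by
      nlinarith [pow_nonneg hx0.le m, pow_nonneg hy0.le m, hapos x ⟨hx0, hx1⟩,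
        mul_nonneg (mul_nonneg hε0 (pow_nonneg hx0.le m)) (pow_nonneg hy0.le m)]
    have ex : x ^ m * a x * Q y =
        (∑ i ∈ Finset.range m, x ^ m * a x * y ^ i) + x ^ m * a x * (ε * y ^ m) := by
      simp only [hQ, mul_add, Finset.mul_sum]
    have ey : y ^ m * a y * Q x =
        (∑ i ∈ Finset.range m, y ^ m * a y * x ^ i) + y ^ m * a y * (ε * x ^ m) := by
      simp only [hQ, mul_add, Finset.mul_sum]
    rw [ex, ey]
    linarith
  linarith
end

section
/- For all real numbers c, c' with 1 < c ≤ c' and every x ∈ (0,1), one has f_{c'}(x) ≤ f_c(x); that is, f_c(x) is nonincreasing in c for each fixed x. -/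
lemma key_mono (x u u' : ℝ) (hx0 : 0 < x) (hx1 : x < 1)
    (hu'0 : 0 < u') (hu1 : u < 1) (hu'1 : u' < 1) (huu : u' ≤ u) :
    u' * ((1 - x * u') / (1 - u')) ≤ u * ((1 - x * u) / (1 - u)) := by
  have hu0 : 0 < u := lt_of_lt_of_le hu'0 huu
  have hd : 0 < 1 - u := by linarith
  have hd' : 0 < 1 - u' := by linarith
  rw [mul_div_assoc', mul_div_assoc', div_le_div_iff₀ hd' hd]
  have hs : u + u' - u * u' ≤ 1 := by nlinarith
  have hs0 : 0 ≤ u + u' - u * u' := by nlinarith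
  have h2 : 0 ≤ 1 - x * (u + u' - u * u') := by nlinarith
  nlinarith [mul_nonneg (sub_nonneg.2 huu) h2]

set_option maxHeartbeats 1000000 in
/-- **`f_c(x)` is nonincreasing in `c` (from the proof of Theorem 3).**
For reals `1 < c ≤ c'` and every `x ∈ (0,1)`, one has `f_{c'}(x) ≤ f_c(x)`,
where `f_c(x) = x^{k-1}(1-ε+εx)·(1 - x^k(1-ε+εx))/(1 - x^{k-1}(1-ε+εx))`
with `k = ⌊c⌋` and `ε = c - k`. -/
theorem f_c_antitone_in_c (c c' : ℝ) (hc : 1 < c) (hcc' : c ≤ c')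
    (k k' : ℕ) (hk : k = ⌊c⌋₊) (hk' : k' = ⌊c'⌋₊)
    (ε ε' : ℝ) (hε : ε = c - k) (hε' : ε' = c' - k')
    (f f' : ℝ → ℝ)
    (hf : ∀ x : ℝ, f x = x ^ (k - 1) * (1 - ε + ε * x) *
      ((1 - x ^ k * (1 - ε + ε * x)) / (1 - x ^ (k - 1) * (1 - ε + ε * x))))
    (hf' : ∀ x : ℝ, f' x = x ^ (k' - 1) * (1 - ε' + ε' * x) *
      ((1 - x ^ k' * (1 - ε' + ε' * x)) / (1 - x ^ (k' - 1) * (1 - ε' + ε' * x))))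
    (x : ℝ) (hx : x ∈ Set.Ioo (0 : ℝ) 1) :
    f' x ≤ f x := by
  obtain ⟨hx0, hx1⟩ := hx
  have hc0 : (0:ℝ) ≤ c := by linarith
  have hc'0 : (0:ℝ) ≤ c' := by linarith
  have hk1 : 1 ≤ k := by
    rw [hk]; exact Nat.le_floor (by exact_mod_cast hc.le)
  have hk'1 : 1 ≤ k' := by
    rw [hk']; exact Nat.le_floor (by push_cast; linarith)
  have hkk' : k ≤ k' := by rw [hk, hk']; exact Nat.floor_mono hcc'
  have hε0 : 0 ≤ ε := by
    have := Nat.floor_le hc0; rw [hε, hk]; linarith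
  have hε1 : ε < 1 := by
    have := Nat.lt_floor_add_one c; rw [hε, hk]; push_cast at this ⊢; linarith
  have hε'0 : 0 ≤ ε' := by
    have := Nat.floor_le hc'0; rw [hε', hk']; linarith
  have hε'1 : ε' < 1 := by
    have := Nat.lt_floor_add_one c'; rw [hε', hk']; push_cast at this ⊢; linarith
  set! A : ℝ := 1 - ε + ε * x with hA
  set! A' : ℝ := 1 - ε' + ε' * x with hA'
  have hApos : 0 < A := by nlinarith [mul_nonneg hε0 hx0.le]
  have hA'pos : 0 < A' := by nlinarith [mul_nonneg hε'0 hx0.le]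
  have hAle1 : A ≤ 1 := by nlinarith [mul_nonneg hε0 (sub_nonneg.2 hx1.le)]
  have hA'le1 : A' ≤ 1 := by nlinarith [mul_nonneg hε'0 (sub_nonneg.2 hx1.le)]
  set! u : ℝ := x ^ (k - 1) * A with hu
  set! u' : ℝ := x ^ (k' - 1) * A' with hu'
  clear_value A A' u u'
  have hu0 : 0 < u := by rw [hu]; exact mul_pos (pow_pos hx0 _) hApos
  have hu'0 : 0 < u' := by rw [hu']; exact mul_pos (pow_pos hx0 _) hA'pos
  -- u < 1
  have hlt1 : ∀ (m : ℕ) (e : ℝ), 1 ≤ m → 0 ≤ e → e < 1 → (m = 1 → 0 < e) →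
      x ^ (m - 1) * (1 - e + e * x) < 1 := by
    intro m e hm he0 he1 hme
    rcases eq_or_lt_of_le hm with hm1 | hm2
    · have : m - 1 = 0 := by omega
      rw [this, pow_zero, one_mul]
      have := hme hm1.symm
      nlinarith
    · have hp : x ^ (m - 1) < 1 := pow_lt_one₀ hx0.le hx1 (by omega)
      have hAe : 0 < 1 - e + e * x := by nlinarith [mul_nonneg he0 hx0.le]
      have hAe1 : 1 - e + e * x ≤ 1 := by nlinarith [mul_nonneg he0 (sub_nonneg.2 hx1.le)]
      calc x ^ (m - 1) * (1 - e + e * x) ≤ x ^ (m - 1) * 1 :=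
            mul_le_mul_of_nonneg_left hAe1 (pow_nonneg hx0.le _)
        _ = x ^ (m - 1) := mul_one _
        _ < 1 := hp
  have hu1 : u < 1 := by
    rw [hu, hA]
    apply hlt1 k ε hk1 hε0 hε1
    intro h1
    have : c < 2 := by
      have := Nat.lt_floor_add_one c; rw [← hk, h1] at this; push_cast at this; linarith
    rw [hε, hk, ← hk, h1]; push_cast; linarith
  have hu'1 : u' < 1 := by
    rw [hu', hA']
    apply hlt1 k' ε' hk'1 hε'0 hε'1
    intro h1
    have hc'2 : c' < 2 := by
      have := Nat.lt_floor_add_one c'; rw [← hk', h1] at this; push_cast at this; linarith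
    rw [hε', hk', ← hk', h1]; push_cast; linarith
  -- u' ≤ u
  have huu : u' ≤ u := by
    rcases eq_or_lt_of_le hkk' with heq | hlt
    · -- same floor: ε ≤ ε'
      have hεε : ε ≤ ε' := by
        rw [hε, hε', ← heq]; linarith
      have : A' ≤ A := by nlinarith [mul_nonneg (sub_nonneg.2 hεε) (sub_nonneg.2 hx1.le)]
      rw [hu, hu', ← heq]
      exact mul_le_mul_of_nonneg_left this (pow_nonneg hx0.le _)
    · -- k < k'
      have hxA : x ≤ A := by nlinarith [mul_nonneg (sub_nonneg.2 hε1.le) (sub_nonneg.2 hx1.le)]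
      have h1 : x ^ k ≤ u := by
        have : x ^ k = x ^ (k - 1) * x := by
          rw [← pow_succ]; congr 1; omega
        rw [this, hu]
        exact mul_le_mul_of_nonneg_left hxA (pow_nonneg hx0.le _)
      have h2 : u' ≤ x ^ (k' - 1) := by
        rw [hu']
        nlinarith [pow_pos hx0 (k' - 1), pow_nonneg hx0.le (k' - 1)]
      have h3 : x ^ (k' - 1) ≤ x ^ k :=
        pow_le_pow_of_le_one hx0.le hx1.le (by omega)
      linarith
  -- rewrite f, f' in terms of u, u'
  have hxk : x ^ k * A = x * u := by
    rw [hu, ← mul_assoc]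
    congr 1
    rw [mul_comm, ← pow_succ]
    congr 1
    omega
  have hxk' : x ^ k' * A' = x * u' := by
    rw [hu', ← mul_assoc]
    congr 1
    rw [mul_comm, ← pow_succ]
    congr 1
    omega
  have main := key_mono x u u' hx0 hx1 hu'0 hu1 hu'1 huu
  rw [hf, hf', ← hA, ← hA', hxk, hxk', ← hu, ← hu']
  exact main
end

section
/- For every natural number n ≥ 1 and every real c > 1, one has n · ∫_0^1 f_c(x) dx − c/(c−1) ≤ Σ_{i=1}^{n−1} f_c(i/n) ≤ n · ∫_0^1 f_c(x) dx, where the integral is taken over the open interval (0,1) (f_c is bounded and monotone there, hence integrable). -/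
/-!
Write `c = k + ε` and `g(x) = x^(k-1) (1 - ε + εx)`, an interpolation of `x^(c-1)`
(`powInterp`). Both `1 - g(x)` and `1 - x g(x)` vanish at `x = 1`; dividing by `1 - x` gives
polynomials `q` and `q + g` (`geomSumInterp`, interpolating `1 + x + ⋯ + x^(c-2)`), with
`q > 0` on `[0, ∞)` because `c > 1`. So `f_c = g (q + g) / q = g + g · (g / q)` extends
continuously to `[0, 1]` with value `c / (c - 1)` at `1`, and it is nonnegative and monotone:
`g` increases, and `g / q` increases because `q(x) / x^(k-1)` is a sum of nonincreasing terms.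

For a monotone `φ` on `[0, 1]` the left and right Riemann sums with `n` pieces bracket `n ∫ φ`;
removing the endpoint terms `φ 0 ≥ 0` and `φ 1 = c / (c - 1)` gives both bounds.
-/

open Set Finset MeasureTheory

theorem Finset.sum_range_add_one_eq_sum_Icc {M : Type*} [AddCommMonoid M] (ψ : ℕ → M)
    (m : ℕ) :
    ∑ i ∈ range m, ψ (i + 1) = ∑ i ∈ Icc 1 m, ψ i := by
  rw [range_eq_Ico, sum_Ico_add', ← Ico_add_one_right_eq_Icc, zero_add]

theorem intervalIntegral.integral_comp_div_natCast (φ : ℝ → ℝ) (n : ℕ) :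
    ∫ t in (0 : ℝ)..n, φ (t / n) = n * ∫ x in (0 : ℝ)..1, φ x := by
  rcases n.eq_zero_or_pos with rfl | hn
  · simp
  · have hn' : (n : ℝ) ≠ 0 := by positivity
    rw [intervalIntegral.integral_comp_div _ hn', zero_div, div_self hn', smul_eq_mul]

theorem pow_mul_pow_le_pow_mul_pow {R : Type*} [CommSemiring R] [PartialOrder R]
    [IsOrderedRing R] {x y : R} {j m : ℕ} (hjm : j ≤ m) (hx : 0 ≤ x) (hxy : x ≤ y) :
    x ^ m * y ^ j ≤ y ^ m * x ^ j := by
  obtain ⟨d, rfl⟩ := Nat.exists_eq_add_of_le hjm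
  have hy : 0 ≤ y := hx.trans hxy
  calc x ^ (j + d) * y ^ j = x ^ j * y ^ j * x ^ d := by ring
    _ ≤ x ^ j * y ^ j * y ^ d := by gcongr
    _ = y ^ (j + d) * x ^ j := by ring

section RiemannSum

variable {φ : ℝ → ℝ}

theorem MonotoneOn.comp_div_natCast (hφ : MonotoneOn φ (Icc 0 1)) (n : ℕ) :
    MonotoneOn (fun t => φ (t / n)) (Icc 0 n) := by
  have hmaps : MapsTo (· / (n : ℝ)) (Icc 0 n) (Icc 0 1) := fun t ht =>
    ⟨div_nonneg ht.1 n.cast_nonneg, div_le_one_of_le₀ ht.2 n.cast_nonneg⟩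
  exact hφ.comp (fun a _ b _ hab => div_le_div_of_nonneg_right hab n.cast_nonneg) hmaps

theorem MonotoneOn.sum_range_div_le_mul_integral (hφ : MonotoneOn φ (Icc 0 1)) (n : ℕ) :
    ∑ i ∈ range n, φ (i / n) ≤ n * ∫ x in (0 : ℝ)..1, φ x := by
  have h := MonotoneOn.sum_le_integral (x₀ := 0) (by rw [zero_add]; exact hφ.comp_div_natCast n)
  simp_rw [zero_add] at h
  rwa [intervalIntegral.integral_comp_div_natCast] at h

theorem MonotoneOn.mul_integral_le_sum_range_div (hφ : MonotoneOn φ (Icc 0 1)) (n : ℕ) :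
    n * ∫ x in (0 : ℝ)..1, φ x ≤ ∑ i ∈ range n, φ ((i + 1 : ℕ) / n) := by
  have h := MonotoneOn.integral_le_sum (x₀ := 0) (by rw [zero_add]; exact hφ.comp_div_natCast n)
  simp_rw [zero_add] at h
  rwa [intervalIntegral.integral_comp_div_natCast] at h

theorem MonotoneOn.mul_integral_sub_le_sum_Icc_div (hφ : MonotoneOn φ (Icc 0 1)) {n : ℕ}
    (hn : 1 ≤ n) :
    n * (∫ x in (0 : ℝ)..1, φ x) - φ 1 ≤ ∑ i ∈ Icc 1 (n - 1), φ (i / n) := by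
  obtain ⟨m, rfl⟩ := Nat.exists_eq_add_of_le' hn
  have h := hφ.mul_integral_le_sum_range_div (m + 1)
  rw [sum_range_succ, sum_range_add_one_eq_sum_Icc (fun i : ℕ => φ (i / (m + 1 : ℕ))),
    div_self (by positivity)] at h
  rw [Nat.add_sub_cancel]
  linarith

theorem MonotoneOn.sum_Icc_div_le_mul_integral_sub (hφ : MonotoneOn φ (Icc 0 1)) {n : ℕ}
    (hn : 1 ≤ n) :
    ∑ i ∈ Icc 1 (n - 1), φ (i / n) ≤ n * (∫ x in (0 : ℝ)..1, φ x) - φ 0 := by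
  obtain ⟨m, rfl⟩ := Nat.exists_eq_add_of_le' hn
  have h := hφ.sum_range_div_le_mul_integral (m + 1)
  rw [sum_range_succ', sum_range_add_one_eq_sum_Icc (fun i : ℕ => φ (i / (m + 1 : ℕ))),
    Nat.cast_zero, zero_div] at h
  rw [Nat.add_sub_cancel]
  linarith

end RiemannSum

namespace CMultiQueue

noncomputable def powInterp (k : ℕ) (ε x : ℝ) : ℝ := x ^ (k - 1) * (1 - ε + ε * x)

noncomputable def geomSumInterp (k : ℕ) (ε x : ℝ) : ℝ :=
  ∑ j ∈ range (k - 1), x ^ j + ε * x ^ (k - 1)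

noncomputable def rankErrorDensity (k : ℕ) (ε x : ℝ) : ℝ :=
  powInterp k ε x * geomSumInterp (k + 1) ε x / geomSumInterp k ε x

variable {k : ℕ} {ε x y : ℝ}

theorem one_sub_mul_geomSumInterp (k : ℕ) (ε x : ℝ) :
    (1 - x) * geomSumInterp k ε x = 1 - powInterp k ε x := by
  simp only [geomSumInterp, powInterp]
  linear_combination -(geom_sum_mul x (k - 1))

theorem geomSumInterp_add_one (hk : 1 ≤ k) (ε x : ℝ) :
    geomSumInterp (k + 1) ε x = geomSumInterp k ε x + powInterp k ε x := by
  obtain ⟨m, rfl⟩ := Nat.exists_eq_add_of_le' hk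
  simp only [geomSumInterp, powInterp, Nat.add_sub_cancel, sum_range_succ]
  ring

theorem powInterp_nonneg (hε₀ : 0 ≤ ε) (hε₁ : ε ≤ 1) (hx : 0 ≤ x) : 0 ≤ powInterp k ε x := by
  unfold powInterp; positivity

theorem powInterp_le_powInterp (hε₀ : 0 ≤ ε) (hε₁ : ε ≤ 1) (hx : 0 ≤ x) (hxy : x ≤ y) :
    powInterp k ε x ≤ powInterp k ε y := by
  have hy : 0 ≤ y := hx.trans hxy
  unfold powInterp
  gcongr

theorem geomSumInterp_nonneg (hε₀ : 0 ≤ ε) (hx : 0 ≤ x) : 0 ≤ geomSumInterp k ε x := by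
  unfold geomSumInterp; positivity

theorem powInterp_mul_geomSumInterp_le (hε₀ : 0 ≤ ε) (hε₁ : ε ≤ 1) (hx : 0 ≤ x) (hxy : x ≤ y) :
    powInterp k ε x * geomSumInterp k ε y ≤ powInterp k ε y * geomSumInterp k ε x := by
  have hy : 0 ≤ y := hx.trans hxy
  have hpow : x ^ (k - 1) * geomSumInterp k ε y ≤ y ^ (k - 1) * geomSumInterp k ε x := by
    simp only [geomSumInterp, mul_add, mul_sum]
    refine add_le_add (sum_le_sum fun j hj => ?_) (le_of_eq (by ring))
    exact pow_mul_pow_le_pow_mul_pow (mem_range.1 hj).le hx hxy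
  have hq : 0 ≤ geomSumInterp k ε y := geomSumInterp_nonneg hε₀ hy
  calc powInterp k ε x * geomSumInterp k ε y
      = (1 - ε + ε * x) * (x ^ (k - 1) * geomSumInterp k ε y) := by unfold powInterp; ring
    _ ≤ (1 - ε + ε * y) * (y ^ (k - 1) * geomSumInterp k ε x) := by gcongr
    _ = powInterp k ε y * geomSumInterp k ε x := by unfold powInterp; ring

theorem geomSumInterp_pos (hε₀ : 0 ≤ ε) (hkε : 1 < k + ε) (hx : 0 ≤ x) :
    0 < geomSumInterp k ε x := by
  unfold geomSumInterp
  rcases le_or_gt k 1 with hk | hk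
  · have hε : 0 < ε := by
      have : (k : ℝ) ≤ 1 := by exact_mod_cast hk
      linarith
    rw [Nat.sub_eq_zero_of_le hk]
    simpa using hε
  · have hone : 1 ≤ ∑ j ∈ range (k - 1), x ^ j := by
      simpa using single_le_sum (fun j _ => pow_nonneg hx j) (mem_range.2 (by omega : 0 < k - 1))
    positivity

theorem rankErrorDensity_eq_add_mul_div (hk : 1 ≤ k) (hq : geomSumInterp k ε x ≠ 0) :
    rankErrorDensity k ε x =
      powInterp k ε x + powInterp k ε x * (powInterp k ε x / geomSumInterp k ε x) := by
  rw [rankErrorDensity, geomSumInterp_add_one hk]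
  field_simp

theorem rankErrorDensity_nonneg (hε₀ : 0 ≤ ε) (hε₁ : ε ≤ 1) (hx : 0 ≤ x) :
    0 ≤ rankErrorDensity k ε x := by
  have := powInterp_nonneg (k := k) hε₀ hε₁ hx
  have := geomSumInterp_nonneg (k := k) hε₀ hx
  have := geomSumInterp_nonneg (k := k + 1) hε₀ hx
  unfold rankErrorDensity
  positivity

theorem rankErrorDensity_monotoneOn (hε₀ : 0 ≤ ε) (hε₁ : ε ≤ 1) (hkε : 1 < k + ε) :
    MonotoneOn (rankErrorDensity k ε) (Ici 0) := by
  have hk : 1 ≤ k := by exact_mod_cast (by linarith : (0 : ℝ) < k)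
  intro x hx y hy hxy
  have hqx := geomSumInterp_pos hε₀ hkε hx
  have hqy := geomSumInterp_pos hε₀ hkε hy
  have hgx := powInterp_nonneg (k := k) hε₀ hε₁ hx
  have hgy := powInterp_nonneg (k := k) hε₀ hε₁ hy
  have hg := powInterp_le_powInterp (k := k) hε₀ hε₁ hx hxy
  have hratio : powInterp k ε x / geomSumInterp k ε x ≤ powInterp k ε y / geomSumInterp k ε y :=
    (div_le_div_iff₀ hqx hqy).2 (powInterp_mul_geomSumInterp_le hε₀ hε₁ hx hxy)
  rw [rankErrorDensity_eq_add_mul_div hk hqx.ne', rankErrorDensity_eq_add_mul_div hk hqy.ne']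
  gcongr

theorem rankErrorDensity_one (hk : 1 ≤ k) : rankErrorDensity k ε 1 = (k + ε) / (k + ε - 1) := by
  simp only [rankErrorDensity, powInterp, geomSumInterp, one_pow, mul_one, one_mul, sub_add_cancel,
    add_tsub_cancel_right, sum_const, card_range, nsmul_eq_mul, Nat.cast_sub hk, Nat.cast_one]
  ring

theorem rankErrorDensity_eq_of_ne_one (hx : x ≠ 1) :
    rankErrorDensity k ε x = x ^ (k - 1) * (1 - ε + ε * x) *
      ((1 - x ^ k * (1 - ε + ε * x)) / (1 - x ^ (k - 1) * (1 - ε + ε * x))) := by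
  have hx' : 1 - x ≠ 0 := sub_ne_zero.2 hx.symm
  have hsucc : x ^ k * (1 - ε + ε * x) = powInterp (k + 1) ε x := by simp [powInterp]
  rw [hsucc, ← powInterp, ← one_sub_mul_geomSumInterp, ← one_sub_mul_geomSumInterp,
    mul_div_mul_left _ _ hx', rankErrorDensity, mul_div_assoc]

end CMultiQueue

open CMultiQueue in
/-- **Integral bounds on the rank-error sum (Theorem 3 (iii)).**
For `n ≥ 1` and real `c > 1`, with `k = ⌊c⌋`, `ε = c - k` and
`f_c(x) = x^{k-1}(1-ε+εx)·(1 - x^k(1-ε+εx))/(1 - x^{k-1}(1-ε+εx))`,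
`n·∫_0^1 f_c - c/(c-1) ≤ ∑_{i=1}^{n-1} f_c(i/n) ≤ n·∫_0^1 f_c`,
the integral being over the open interval `(0,1)`. -/
theorem c_multiqueue_integral_bounds (n : ℕ) (hn : 1 ≤ n)
    (c : ℝ) (hc : 1 < c) (k : ℕ) (hk : k = ⌊c⌋₊) (ε : ℝ) (hε : ε = c - k)
    (f : ℝ → ℝ)
    (hf : ∀ x : ℝ, f x = x ^ (k - 1) * (1 - ε + ε * x) *
      ((1 - x ^ k * (1 - ε + ε * x)) / (1 - x ^ (k - 1) * (1 - ε + ε * x)))) :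
    n * (∫ x in Set.Ioo (0 : ℝ) 1, f x) - c / (c - 1)
        ≤ ∑ i ∈ Finset.Icc 1 (n - 1), f ((i : ℝ) / n) ∧
      ∑ i ∈ Finset.Icc 1 (n - 1), f ((i : ℝ) / n)
        ≤ n * (∫ x in Set.Ioo (0 : ℝ) 1, f x) := by
  have hk₁ : 1 ≤ k := hk ▸ Nat.le_floor (by exact_mod_cast hc.le)
  have hc_eq : c = k + ε := by rw [hε]; ring
  have hε₀ : 0 ≤ ε := by rw [hε, hk]; linarith [Nat.floor_le (by linarith : 0 ≤ c)]
  have hε₁ : ε ≤ 1 := by rw [hε, hk]; linarith [Nat.lt_floor_add_one c]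
  set φ := rankErrorDensity k ε
  have hφ : MonotoneOn φ (Icc 0 1) :=
    (rankErrorDensity_monotoneOn hε₀ hε₁ (hc_eq ▸ hc)).mono Icc_subset_Ici_self
  have hfφ : EqOn f φ (Ioo 0 1) := fun x hx =>
    (hf x).trans (rankErrorDensity_eq_of_ne_one hx.2.ne).symm
  have hint : ∫ x in Ioo 0 1, f x = ∫ x in 0..1, φ x := by
    rw [setIntegral_congr_fun measurableSet_Ioo hfφ, ← integral_Ioc_eq_integral_Ioo,
      intervalIntegral.integral_of_le zero_le_one]
  have hsum : ∑ i ∈ Icc 1 (n - 1), f (i / n) = ∑ i ∈ Icc 1 (n - 1), φ (i / n) := by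
    refine sum_congr rfl fun i hi => hfφ ?_
    obtain ⟨hi₁, hi₂⟩ := mem_Icc.1 hi
    refine ⟨by positivity, (div_lt_one (by positivity)).2 ?_⟩
    exact_mod_cast (by omega : i < n)
  have hφ₀ : 0 ≤ φ 0 := rankErrorDensity_nonneg hε₀ hε₁ le_rfl
  have hφ₁ : φ 1 = c / (c - 1) := by rw [hc_eq]; exact rankErrorDensity_one hk₁
  rw [hint, hsum]
  exact ⟨hφ₁ ▸ hφ.mul_integral_sub_le_sum_Icc_div hn,
    (hφ.sum_Icc_div_le_mul_integral_sub hn).trans (sub_le_self _ hφ₀)⟩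
end

section
/- For every integer c ≥ 2 (so ε = 0 and f_c(x) = x^{c−1}·(1 − x^c)/(1 − x^{c−1})), one has 1/c ≤ ∫_0^1 f_c(x) dx ≤ 1/(c−1). -/
open MeasureTheory Finset Set

/-- **Bounds on `∫_0^1 f_c` for integer `c ≥ 2` (from the proof of Theorem 3 (iv)).**
For an integer `c ≥ 2` (so `ε = 0` and `f_c(x) = x^{c-1}(1-x^c)/(1-x^{c-1})`),
one has `1/c ≤ ∫_0^1 f_c(x) dx ≤ 1/(c-1)`, the integral being over `(0,1)`. -/
theorem integer_c_integral_bounds (c : ℕ) (hc : 2 ≤ c) (f : ℝ → ℝ)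
    (hf : ∀ x : ℝ, f x = x ^ (c - 1) * ((1 - x ^ c) / (1 - x ^ (c - 1)))) :
    1 / (c : ℝ) ≤ (∫ x in Set.Ioo (0 : ℝ) 1, f x) ∧
      (∫ x in Set.Ioo (0 : ℝ) 1, f x) ≤ 1 / ((c : ℝ) - 1) := by
  obtain ⟨k, hk1, rfl⟩ : ∃ k, 1 ≤ k ∧ c = k + 1 := ⟨c - 1, by omega, by omega⟩
  simp only [Nat.add_sub_cancel] at hf
  have hkR : (1:ℝ) ≤ (k:ℝ) := by exact_mod_cast hk1
  set g : ℝ → ℝ := fun x => x ^ k * ((∑ i ∈ range (k+1), x ^ i) / (∑ i ∈ range k, x ^ i))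
    with hg
  -- f = g on Ioo 0 1
  have hfg : ∀ x ∈ Ioo (0:ℝ) 1, f x = g x := by
    intro x hx
    have h1 : (1:ℝ) - x ≠ 0 := by have := hx.2; intro h; linarith [sub_eq_zero.mp h]
    have e : ∀ n : ℕ, 1 - x ^ n = (1 - x) * ∑ i ∈ range n, x ^ i := by
      intro n
      have := geom_sum_mul x n
      linear_combination this
    rw [hf, hg]
    simp only
    rw [e (k+1), e k, mul_div_mul_left _ _ h1]
  -- denominator positivity on Icc
  have hBpos : ∀ x ∈ Icc (0:ℝ) 1, 0 < ∑ i ∈ range k, x ^ i := by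
    intro x hx
    apply Finset.sum_pos' (fun i _ => pow_nonneg hx.1 i)
    exact ⟨0, Finset.mem_range.mpr (by omega), by norm_num⟩
  have hcontS : ∀ n : ℕ, Continuous fun x : ℝ => ∑ i ∈ range n, x ^ i :=
    fun n => continuous_finset_sum _ fun i _ => continuous_pow i
  have hgcont : ContinuousOn g (Icc (0:ℝ) 1) :=
    ((continuous_pow k).continuousOn).mul
      (((hcontS (k+1)).continuousOn).div ((hcontS k).continuousOn)
        (fun x hx => (hBpos x hx).ne'))
  have hgint : IntegrableOn g (Ioo (0:ℝ) 1) :=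
    (hgcont.integrableOn_Icc).mono_set Ioo_subset_Icc_self
  have hfint : IntegrableOn f (Ioo (0:ℝ) 1) :=
    hgint.congr_fun (fun x hx => (hfg x hx).symm) measurableSet_Ioo
  -- monomial integrals
  have key : ∀ n : ℕ, (∫ x in Ioo (0:ℝ) 1, x ^ n) = 1 / (n + 1) := by
    intro n
    rw [← integral_Ioc_eq_integral_Ioo, ← intervalIntegral.integral_of_le zero_le_one,
      integral_pow]
    norm_num
  have hmonint : ∀ n : ℕ, IntegrableOn (fun x : ℝ => x ^ n) (Ioo (0:ℝ) 1) := fun n =>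
    ((continuous_pow n).integrableOn_Icc).mono_set Ioo_subset_Icc_self
  constructor
  · -- lower bound
    have hle : ∀ x ∈ Ioo (0:ℝ) 1, x ^ k ≤ f x := by
      intro x hx
      rw [hfg x hx, hg]
      simp only
      have hB := hBpos x ⟨hx.1.le, hx.2.le⟩
      have hA : (∑ i ∈ range k, x ^ i) ≤ ∑ i ∈ range (k+1), x ^ i := by
        rw [Finset.sum_range_succ]; nlinarith [pow_nonneg hx.1.le k]
      have h1 : (1:ℝ) ≤ (∑ i ∈ range (k+1), x ^ i) / (∑ i ∈ range k, x ^ i) :=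
        (one_le_div hB).mpr hA
      nlinarith [pow_nonneg hx.1.le k]
    have := setIntegral_mono_on (hmonint k) hfint measurableSet_Ioo hle
    rw [key k] at this
    push_cast
    linarith
  · -- upper bound
    have hub : ∀ x ∈ Ioo (0:ℝ) 1, f x ≤ x ^ k + x ^ (k+1) / k := by
      intro x hx
      rw [hfg x hx, hg]
      simp only
      have hB := hBpos x ⟨hx.1.le, hx.2.le⟩
      have hx0 : 0 < x := hx.1
      have hBk : (k:ℝ) * x ^ (k-1) ≤ ∑ i ∈ range k, x ^ i := by
        have : ∀ i ∈ range k, x ^ (k-1) ≤ x ^ i := by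
          intro i hi
          have hik := Finset.mem_range.mp hi
          exact pow_le_pow_of_le_one hx0.le hx.2.le (by omega)
        calc (k:ℝ) * x ^ (k-1) = (range k).card • x ^ (k-1) := by
              simp [nsmul_eq_mul]
          _ ≤ ∑ i ∈ range k, x ^ i := Finset.card_nsmul_le_sum _ _ _ this
      have hsplit : x ^ k * ((∑ i ∈ range (k+1), x ^ i) / (∑ i ∈ range k, x ^ i))
          = x ^ k + x ^ k * x ^ k / (∑ i ∈ range k, x ^ i) := by
        rw [Finset.sum_range_succ]
        field_simp
      rw [hsplit]
      have hkx : 0 < (k:ℝ) * x ^ (k-1) := by positivity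
      have h2 : x ^ k * x ^ k / (∑ i ∈ range k, x ^ i)
          ≤ x ^ k * x ^ k / ((k:ℝ) * x ^ (k-1)) :=
        div_le_div_of_nonneg_left (by positivity) hkx hBk
      have h3 : x ^ k * x ^ k / ((k:ℝ) * x ^ (k-1)) = x ^ (k+1) / k := by
        have hxe : x ^ k * x ^ k = x ^ (k+1) * x ^ (k-1) := by
          rw [← pow_add, ← pow_add]; congr 1; omega
        rw [hxe, mul_comm (k:ℝ) (x ^ (k-1)), mul_comm (x ^ (k+1)) (x ^ (k-1)),
          mul_div_mul_left _ _ (by positivity : (x:ℝ) ^ (k-1) ≠ 0)]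
      linarith [h2, h3.le, h3.ge]
    have hupint : IntegrableOn (fun x : ℝ => x ^ k + x ^ (k+1) / k) (Ioo (0:ℝ) 1) :=
      (hmonint k).add ((hmonint (k+1)).div_const _)
    have hmono := setIntegral_mono_on hfint hupint measurableSet_Ioo hub
    have hval : (∫ x in Ioo (0:ℝ) 1, (x ^ k + x ^ (k+1) / k))
        = 1 / ((k:ℝ) + 1) + (1 / ((k:ℝ) + 2)) / k := by
      rw [integral_add (hmonint k) ((hmonint (k+1)).div_const _), integral_div,
        key k, key (k+1)]
      push_cast
      ring
    rw [hval] at hmono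
    have hgoal : 1 / ((k:ℝ) + 1) + (1 / ((k:ℝ) + 2)) / k ≤ 1 / ((↑(k+1):ℝ) - 1) := by
      push_cast
      have hk0 : (0:ℝ) < k := by linarith
      rw [show ((k:ℝ) + 1 - 1) = (k:ℝ) by ring]
      rw [div_div, div_add_div _ _ (by positivity) (by positivity),
        div_le_div_iff₀ (by positivity) hk0]
      nlinarith
    linarith
end

section
/- For every natural number n ≥ 1 and every real c ≥ 2, one has n/⌈c⌉ − c/(c−1) ≤ Σ_{i=1}^{n−1} f_c(i/n) ≤ n/(⌊c⌋−1). -/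
lemma aux1 (m : ℕ) (t : ℝ) (h1 : t ≤ 1) : (1 + (m:ℝ)*t)*(1-t)^m ≤ 1 := by
  induction m with
  | zero => simp
  | succ m ih =>
    have h0 : (0:ℝ) ≤ (1-t)^m := pow_nonneg (by linarith) m
    push_cast
    rw [pow_succ]
    nlinarith [mul_nonneg h0 (sq_nonneg t)]

lemma aux3 (m : ℕ) (y : ℝ) (hy : 0 ≤ y) : y^(m+1) + ((m:ℝ)+1)*y^m ≤ (y+1)^(m+1) := by
  induction m with
  | zero => norm_num
  | succ m ih =>
    have hp : y^m ≤ (y+1)^m := pow_le_pow_left₀ hy (by linarith) m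
    push_cast
    rw [show m+1+1 = (m+1)+1 from rfl, pow_succ y (m+1), pow_succ (y+1) (m+1)]
    nlinarith [mul_le_mul_of_nonneg_right ih (show (0:ℝ) ≤ y+1 by linarith),
      pow_nonneg hy m, pow_succ y m]

lemma aux2 (m : ℕ) (y : ℝ) (hy : 0 ≤ y) : (y+1)^(m+1) ≤ y^(m+1) + ((m:ℝ)+1)*(y+1)^m := by
  induction m with
  | zero => norm_num
  | succ m ih =>
    have hp : y^(m+1) ≤ (y+1)^(m+1) := pow_le_pow_left₀ hy (by linarith) _
    push_cast
    rw [pow_succ y (m+1), pow_succ (y+1) (m+1)]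
    nlinarith [mul_le_mul_of_nonneg_right ih (show (0:ℝ) ≤ y+1 by linarith), hp,
      pow_succ y m, pow_succ (y+1) m]

lemma sum_pow_upper (m n : ℕ) :
    ((m:ℝ)+1) * ∑ i ∈ Finset.range n, (i:ℝ)^m ≤ (n:ℝ)^(m+1) := by
  induction n with
  | zero => simp
  | succ n ih =>
    rw [Finset.sum_range_succ, mul_add]
    have h3 := aux3 m (n:ℝ) (Nat.cast_nonneg n)
    push_cast
    linarith

lemma sum_pow_lower (m n : ℕ) :
    (n:ℝ)^(m+1) ≤ ((m:ℝ)+1) * ∑ i ∈ Finset.range n, (i:ℝ)^m + ((m:ℝ)+1) * (n:ℝ)^m := by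
  induction n with
  | zero => simp; positivity
  | succ n ih =>
    rw [Finset.sum_range_succ, mul_add]
    have h2 := aux2 m (n:ℝ) (Nat.cast_nonneg n)
    push_cast
    linarith

lemma pt_up (k : ℕ) (hk : 2 ≤ k) (ε x : ℝ) (hε0 : 0 ≤ ε) (hε1 : ε < 1)
    (hx0 : 0 < x) (hx1 : x < 1) :
    x ^ (k-1) * (1 - ε + ε * x) *
      ((1 - x ^ k * (1 - ε + ε * x)) / (1 - x ^ (k-1) * (1 - ε + ε * x)))
      ≤ (k:ℝ)/((k:ℝ)-1) * x^(k-1) := by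
  obtain ⟨m, rfl⟩ : ∃ m, k = m + 1 := ⟨k-1, by omega⟩
  have hm1 : 1 ≤ m := by omega
  simp only [Nat.add_sub_cancel]
  set u := 1 - ε + ε*x with hu
  have hu0 : 0 < u := by nlinarith
  have hu1 : u ≤ 1 := by nlinarith
  set b := x^m with hb
  have hb0 : 0 < b := pow_pos hx0 m
  have hb1 : b < 1 := pow_lt_one₀ hx0.le hx1 (by omega)
  set a := b*u with ha
  have ha0 : 0 < a := mul_pos hb0 hu0
  have hab : a ≤ b := by nlinarith
  have ha1 : a < 1 := lt_of_le_of_lt hab hb1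
  have hxa : x^(m+1) * u = x * a := by rw [ha, hb, pow_succ]; ring
  rw [hxa]
  have hA : a * ((1 - x*a)/(1-a)) ≤ b * ((1 - x*b)/(1-b)) := by
    rw [mul_div_assoc', mul_div_assoc', div_le_div_iff₀ (by linarith) (by linarith)]
    have key : x*(a+b-a*b) ≤ 1 := by
      nlinarith [mul_pos (sub_pos.2 ha1) (sub_pos.2 hb1), mul_pos ha0 hb0]
    nlinarith [mul_nonneg (sub_nonneg.2 hab) (sub_nonneg.2 key)]
  have hB : b * ((1 - x*b)/(1-b)) ≤ ((m:ℝ)+1)/(m:ℝ) * b := by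
    have haux := aux1 m (1-x) (by linarith)
    have haux' : (1 + (m:ℝ)*(1-x)) * b ≤ 1 := by
      rw [hb]; simpa using haux
    have hm0 : (0:ℝ) < m := by exact_mod_cast hm1
    rw [mul_div_assoc', div_le_iff₀ (by linarith), div_mul_eq_mul_div,
      div_mul_eq_mul_div, le_div_iff₀ hm0]
    nlinarith [mul_nonneg hb0.le (sub_nonneg.2 haux')]
  have hcast : ((m:ℝ)+1)/(m:ℝ) * b = (↑(m+1):ℝ)/((↑(m+1):ℝ)-1) * b := by
    push_cast; ring_nf
  calc a * ((1 - x*a)/(1-a)) ≤ b * ((1 - x*b)/(1-b)) := hA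
    _ ≤ ((m:ℝ)+1)/(m:ℝ) * b := hB
    _ = (↑(m+1):ℝ)/((↑(m+1):ℝ)-1) * b := hcast

lemma pt_low (k : ℕ) (hk : 2 ≤ k) (ε x : ℝ) (hε0 : 0 ≤ ε) (hε1 : ε < 1)
    (hx0 : 0 < x) (hx1 : x < 1) :
    x ^ (k-1) * (1 - ε + ε * x)
      ≤ x ^ (k-1) * (1 - ε + ε * x) *
        ((1 - x ^ k * (1 - ε + ε * x)) / (1 - x ^ (k-1) * (1 - ε + ε * x))) := by
  obtain ⟨m, rfl⟩ : ∃ m, k = m + 1 := ⟨k-1, by omega⟩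
  have hm1 : 1 ≤ m := by omega
  simp only [Nat.add_sub_cancel]
  set u := 1 - ε + ε*x with hu
  have hu0 : 0 < u := by nlinarith
  have hu1 : u ≤ 1 := by nlinarith
  set b := x^m with hb
  have hb0 : 0 < b := pow_pos hx0 m
  have hb1 : b < 1 := pow_lt_one₀ hx0.le hx1 (by omega)
  set a := b*u with ha
  have ha0 : 0 < a := mul_pos hb0 hu0
  have hab : a ≤ b := by nlinarith
  have ha1 : a < 1 := lt_of_le_of_lt hab hb1
  have hxa : x^(m+1) * u = x * a := by rw [ha, hb, pow_succ]; ring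
  rw [hxa]
  have : (1:ℝ) ≤ (1 - x*a)/(1-a) := by
    rw [le_div_iff₀ (by linarith)]
    nlinarith
  nlinarith [mul_le_mul_of_nonneg_left this ha0.le]

/-- **Crude bounds on the rank-error sum (Theorem 3 (iv)).**
For `n ≥ 1` and real `c ≥ 2`, with `k = ⌊c⌋`, `ε = c - k` and
`f_c(x) = x^{k-1}(1-ε+εx)·(1 - x^k(1-ε+εx))/(1 - x^{k-1}(1-ε+εx))`,
one has `n/⌈c⌉ - c/(c-1) ≤ ∑_{i=1}^{n-1} f_c(i/n) ≤ n/(⌊c⌋-1)`. -/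
theorem c_multiqueue_crude_bounds (n : ℕ) (hn : 1 ≤ n)
    (c : ℝ) (hc : 2 ≤ c) (k : ℕ) (hk : k = ⌊c⌋₊) (ε : ℝ) (hε : ε = c - k)
    (f : ℝ → ℝ)
    (hf : ∀ x : ℝ, f x = x ^ (k - 1) * (1 - ε + ε * x) *
      ((1 - x ^ k * (1 - ε + ε * x)) / (1 - x ^ (k - 1) * (1 - ε + ε * x)))) :
    (n : ℝ) / (⌈c⌉₊ : ℝ) - c / (c - 1)
        ≤ ∑ i ∈ Finset.Icc 1 (n - 1), f ((i : ℝ) / n) ∧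
      ∑ i ∈ Finset.Icc 1 (n - 1), f ((i : ℝ) / n)
        ≤ (n : ℝ) / ((⌊c⌋₊ : ℝ) - 1) := by
  rw [← hk]
  have hc0 : (0:ℝ) ≤ c := by linarith
  have hk2 : 2 ≤ k := by
    rw [hk]; exact Nat.le_floor (by exact_mod_cast hc)
  have hkc : (k:ℝ) ≤ c := by rw [hk]; exact Nat.floor_le hc0
  have hck : c < (k:ℝ) + 1 := by rw [hk]; exact Nat.lt_floor_add_one c
  have hε0 : 0 ≤ ε := by rw [hε]; linarith
  have hε1 : ε < 1 := by rw [hε]; linarith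
  have hKk : k ≤ ⌈c⌉₊ := hk ▸ Nat.floor_le_ceil c
  have hKk1 : ⌈c⌉₊ ≤ k + 1 := by rw [hk]; exact Nat.ceil_le_floor_add_one c
  have hn0 : (0:ℝ) < n := by exact_mod_cast hn
  have hmem : ∀ i ∈ Finset.Icc 1 (n-1), 0 < (i:ℝ)/n ∧ (i:ℝ)/n < 1 := by
    intro i hi
    rw [Finset.mem_Icc] at hi
    constructor
    · apply div_pos _ hn0
      exact_mod_cast (by omega : 0 < i)
    · rw [div_lt_one hn0]
      exact_mod_cast (by omega : i < n)
  have hsub : Finset.Icc 1 (n-1) ⊆ Finset.range n := by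
    intro i hi; rw [Finset.mem_Icc] at hi; rw [Finset.mem_range]; omega
  have hIcc : ∀ (m : ℕ), 1 ≤ m → ∑ i ∈ Finset.Icc 1 (n-1), ((i:ℝ)/n)^m
      = (∑ i ∈ Finset.range n, (i:ℝ)^m) / (n:ℝ)^m := by
    intro m hm
    rw [Finset.sum_subset hsub (by
      intro i hir hni
      rw [Finset.mem_range] at hir
      rw [Finset.mem_Icc] at hni
      have hi0 : i = 0 := by omega
      subst hi0
      simp [zero_pow (by omega : m ≠ 0)])]
    simp only [div_pow]
    rw [Finset.sum_div]
  have hk1R : (1:ℝ) < (k:ℝ) := by exact_mod_cast (by omega : 1 < k)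
  constructor
  · -- lower bound
    set M := ⌈c⌉₊ - 1 with hM
    have hM1 : 1 ≤ M := by omega
    have hMK : M + 1 = ⌈c⌉₊ := by omega
    have hKR : (⌈c⌉₊:ℝ) = (M:ℝ) + 1 := by rw [← hMK]; push_cast; ring
    have hKpos : (0:ℝ) < (⌈c⌉₊:ℝ) := by rw [hKR]; positivity
    have hpt : ∀ i ∈ Finset.Icc 1 (n-1), ((i:ℝ)/n)^M ≤ f ((i:ℝ)/n) := by
      intro i hi
      obtain ⟨h1, h2⟩ := hmem i hi
      have base := pt_low k hk2 ε _ hε0 hε1 h1 h2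
      rw [hf]
      refine le_trans ?_ base
      rcases (by omega : ⌈c⌉₊ = k ∨ ⌈c⌉₊ = k+1) with hKe | hKe
      · have hceq : c = (k:ℝ) := by
          have := Nat.le_ceil c
          rw [hKe] at this
          linarith
        have hez : ε = 0 := by rw [hε, hceq]; ring
        have hMe : M = k - 1 := by omega
        rw [hez, hMe]
        norm_num
      · have hMe : M = k := by omega
        have hux : (i:ℝ)/n ≤ 1 - ε + ε*((i:ℝ)/n) := by nlinarith
        have hpk : ((i:ℝ)/n)^k = ((i:ℝ)/n)^(k-1) * ((i:ℝ)/n) := by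
          rw [← pow_succ]; congr 1; omega
        rw [hMe, hpk]
        exact mul_le_mul_of_nonneg_left hux (pow_nonneg h1.le _)
    have step1 := Finset.sum_le_sum hpt
    rw [hIcc M hM1] at step1
    have hS2 := sum_pow_lower M n
    have hpowM : (0:ℝ) < (n:ℝ)^M := pow_pos hn0 _
    have hlink : (n:ℝ)^(M+1) = (n:ℝ) * (n:ℝ)^M := by rw [pow_succ]; ring
    have hSdiv : (n:ℝ)/(⌈c⌉₊:ℝ) - 1 ≤ (∑ i ∈ Finset.range n, (i:ℝ)^M) / (n:ℝ)^M := by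
      rw [le_div_iff₀ hpowM]
      have heq : ((n:ℝ)/(⌈c⌉₊:ℝ) - 1) * (n:ℝ)^M
          = ((n:ℝ) * (n:ℝ)^M - (⌈c⌉₊:ℝ) * (n:ℝ)^M) / (⌈c⌉₊:ℝ) := by
        field_simp
      rw [heq, div_le_iff₀ hKpos, hKR]
      nlinarith [hS2, hlink]
    have hone : (1:ℝ) ≤ c/(c-1) := by
      rw [le_div_iff₀ (by linarith : (0:ℝ) < c - 1)]
      linarith
    calc (n:ℝ)/(⌈c⌉₊:ℝ) - c/(c-1) ≤ (n:ℝ)/(⌈c⌉₊:ℝ) - 1 := by linarith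
      _ ≤ (∑ i ∈ Finset.range n, (i:ℝ)^M) / (n:ℝ)^M := hSdiv
      _ ≤ ∑ i ∈ Finset.Icc 1 (n-1), f ((i:ℝ)/n) := step1
  · -- upper bound
    have step1 : ∑ i ∈ Finset.Icc 1 (n-1), f ((i:ℝ)/n)
        ≤ ∑ i ∈ Finset.Icc 1 (n-1), (k:ℝ)/((k:ℝ)-1) * ((i:ℝ)/n)^(k-1) := by
      apply Finset.sum_le_sum
      intro i hi
      obtain ⟨h1, h2⟩ := hmem i hi
      rw [hf]
      exact pt_up k hk2 ε _ hε0 hε1 h1 h2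
    rw [← Finset.mul_sum, hIcc (k-1) (by omega)] at step1
    have hS := sum_pow_upper (k-1) n
    rw [show k-1+1 = k from by omega] at hS
    have hScast : (k:ℝ) * ∑ i ∈ Finset.range n, (i:ℝ)^(k-1) ≤ (n:ℝ)^k := by
      have : ((k-1:ℕ):ℝ) + 1 = (k:ℝ) := by
        rw [Nat.cast_sub (by omega : 1 ≤ k)]; push_cast; ring
      rw [← this]; exact hS
    have hpow : (0:ℝ) < (n:ℝ)^(k-1) := pow_pos hn0 _
    have hlink : (n:ℝ) * (n:ℝ)^(k-1) = (n:ℝ)^k := by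
      rw [← pow_succ']; congr 1; omega
    have hSdiv : (∑ i ∈ Finset.range n, (i:ℝ)^(k-1)) / (n:ℝ)^(k-1) ≤ (n:ℝ)/(k:ℝ) := by
      rw [div_le_div_iff₀ hpow (by linarith : (0:ℝ) < (k:ℝ))]
      linarith [hScast, hlink]
    calc ∑ i ∈ Finset.Icc 1 (n-1), f ((i:ℝ)/n)
        ≤ (k:ℝ)/((k:ℝ)-1) * ((∑ i ∈ Finset.range n, (i:ℝ)^(k-1)) / (n:ℝ)^(k-1)) := step1
      _ ≤ (k:ℝ)/((k:ℝ)-1) * ((n:ℝ)/(k:ℝ)) := by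
          exact mul_le_mul_of_nonneg_left hSdiv
            (div_nonneg (by linarith) (by linarith))
      _ = (n:ℝ)/((k:ℝ)-1) := by
          rw [div_mul_div_comm, mul_comm ((k:ℝ)-1) (k:ℝ)]
          exact mul_div_mul_left _ _ (by linarith)
end

section
/- Let i* be the minimum of K independent uniformly random samples (with replacement) from {1, …, n}, where K = k with probability 1−ε and K = k+1 with probability ε, for a natural number k ≥ 1 and ε ∈ [0,1) with k + ε > 1. Then P[i* ≤ i] = 1 − (1 − i/n)^k·(1 − ε·i/n) for every i ∈ {1, …, n}, and moreover P[i* ≤ i] > i/n for every i ∈ {1, …, n−1} (i.e., the choice distribution of the c-MultiQueue with c = k + ε satisfies condition (☆)). -/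
/-!
With `q = 1 - i/n`, the minimum exceeds `i` exactly when `K = m` and the first `m` samples all
exceed `i`; by independence this has probability `(1 - ε) q^k + ε q^(k+1) = q^k (1 - ε i/n)`, and
the distribution function is its complement. Condition (☆) is `q^k (1 - ε i/n) < q`, which holds
because either `ε > 0` or `k ≥ 2`.

No hypothesis makes `K` or the `X j` measurable, so `ℙ` acts on these events only as an outer
measure. The prescribed laws force `ℙ A + ℙ Aᶜ = 1` for the basic events `A`, and that makes them
null-measurable, which is what justifies taking complements and adding over disjoint unions.
-/

open MeasureTheory ProbabilityTheory Finset Function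
open scoped ENNReal

theorem ENNReal.ofReal_one_sub_add_ofReal {x : ℝ} (h0 : 0 ≤ x) (h1 : x ≤ 1) :
    ENNReal.ofReal (1 - x) + ENNReal.ofReal x = 1 := by
  rw [← ENNReal.ofReal_add (by linarith) h0, sub_add_cancel, ENNReal.ofReal_one]

theorem ENNReal.ofReal_one_sub_div_add_ofReal_div {i n : ℕ} (hi : i ≤ n) :
    ENNReal.ofReal (1 - i / n) + ENNReal.ofReal (i / n) = 1 :=
  ENNReal.ofReal_one_sub_add_ofReal (by positivity)
    (div_le_one_of_le₀ (by exact_mod_cast hi) (by positivity))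

theorem ENNReal.natCast_mul_one_div_natCast {m n : ℕ} (hn : 0 < n) :
    (m : ℝ≥0∞) * (1 / n) = ENNReal.ofReal (m / n) := by
  rw [ENNReal.ofReal_div_of_pos (by exact_mod_cast hn), ENNReal.ofReal_natCast,
    ENNReal.ofReal_natCast, mul_one_div]

theorem ENNReal.one_sub_ofReal_mul_pow_add_ofReal_mul_pow {ε x : ℝ} (k : ℕ) (hε0 : 0 ≤ ε)
    (hε1 : ε ≤ 1) (hx : x ≤ 1) :
    1 - (ENNReal.ofReal (1 - ε) * ENNReal.ofReal (1 - x) ^ k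
        + ENNReal.ofReal ε * ENNReal.ofReal (1 - x) ^ (k + 1))
      = ENNReal.ofReal (1 - (1 - x) ^ k * (1 - ε * x)) := by
  have hq : 0 ≤ 1 - x := by linarith
  have hεx : 0 ≤ 1 - ε * x := by nlinarith
  rw [← ENNReal.ofReal_pow hq, ← ENNReal.ofReal_pow hq, ← ENNReal.ofReal_mul (by linarith),
    ← ENNReal.ofReal_mul hε0, ← ENNReal.ofReal_add (by positivity) (by positivity),
    ← ENNReal.ofReal_one, ← ENNReal.ofReal_sub _ (by positivity)]
  congr 1
  ring

theorem Nat.lt_sInf_setOf_exists_iff {x : ℕ → ℕ} {K i : ℕ} (hK : 0 < K) :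
    i < sInf {m | ∃ j < K, x j = m} ↔ ∀ j < K, i < x j := by
  have hne : {m | ∃ j < K, x j = m}.Nonempty := ⟨x 0, 0, hK, rfl⟩
  rw [Nat.lt_iff_add_one_le, le_csInf_iff' hne]
  exact ⟨fun h j hj => h ⟨j, hj, rfl⟩, fun h _ ⟨j, hj, hjm⟩ => hjm ▸ h j hj⟩

theorem lt_one_sub_one_sub_pow_mul_one_sub_mul {x ε : ℝ} {k : ℕ} (hx0 : 0 < x) (hx1 : x < 1)
    (hk : 1 ≤ k) (hε : 0 ≤ ε) (hkε : 1 < k + ε) : x < 1 - (1 - x) ^ k * (1 - ε * x) := by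
  rw [lt_sub_comm]
  have hq0 : 0 < 1 - x := by linarith
  have hq1 : 1 - x < 1 := by linarith
  rcases hε.eq_or_lt with rfl | hεpos
  · have hk2 : 2 ≤ k := by exact_mod_cast (show (1 : ℝ) < k by simpa using hkε)
    calc (1 - x) ^ k * (1 - 0 * x) = (1 - x) ^ k := by ring
      _ ≤ (1 - x) ^ 2 := pow_le_pow_of_le_one hq0.le hq1.le hk2
      _ < 1 - x := by nlinarith
  · calc (1 - x) ^ k * (1 - ε * x) < (1 - x) ^ k * 1 := by
          gcongr; nlinarith
      _ ≤ 1 - x := by rw [mul_one]; exact pow_le_of_le_one hq0.le hq1.le (by omega)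

section

variable {Ω : Type*}

theorem setOf_forall_lt_lt_eq_biUnion {K : Ω → ℕ} {X : ℕ → Ω → ℕ} {M : Finset ℕ} {i : ℕ}
    (hK : ∀ ω, K ω ∈ M) :
    {ω | ∀ j < K ω, i < X j ω} = ⋃ m ∈ M, {ω | K ω = m} ∩ ⋂ l ∈ range m, {ω | i < X l ω} := by
  ext ω
  simp only [Set.mem_ofPred_eq, Set.mem_iUnion, Set.mem_inter_iff, Set.mem_iInter, mem_range,
    exists_prop]
  exact ⟨fun h => ⟨K ω, hK ω, rfl, h⟩, fun ⟨_, _, hm, h⟩ => hm ▸ h⟩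

variable [MeasurableSpace Ω] {μ : Measure Ω}

/-- The measurable hulls of `s` and `sᶜ` overlap in a null set. -/
theorem MeasureTheory.NullMeasurableSet.of_measure_add_measure_compl_le [IsFiniteMeasure μ]
    {s : Set Ω} (h : μ s + μ sᶜ ≤ μ Set.univ) : NullMeasurableSet s μ := by
  set M := toMeasurable μ s
  set N := toMeasurable μ sᶜ
  have hcover : M ∪ N = Set.univ := by
    refine Set.eq_univ_of_forall fun ω => ?_
    by_cases hω : ω ∈ s
    · exact Or.inl (subset_toMeasurable μ s hω)
    · exact Or.inr (subset_toMeasurable μ sᶜ hω)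
  have hMN : μ (M ∩ N) = 0 := by
    have hsum := measure_union_add_inter (μ := μ) M (measurableSet_toMeasurable μ sᶜ)
    rw [hcover, measure_toMeasurable, measure_toMeasurable] at hsum
    refine nonpos_iff_eq_zero.1 (ENNReal.le_of_add_le_add_left (measure_ne_top μ Set.univ) ?_)
    rw [hsum, add_zero]
    exact h
  have hnull : μ (M \ s) = 0 :=
    measure_mono_null (show M \ s ⊆ M ∩ N from fun ω hω => ⟨hω.1, subset_toMeasurable μ sᶜ hω.2⟩)
      hMN
  rw [← Set.sdiff_sdiff_cancel_left (subset_toMeasurable μ s)]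
  exact (measurableSet_toMeasurable μ s).nullMeasurableSet.diff (.of_null hnull)

theorem MeasureTheory.measure_eq_of_le_of_measure_compl_le [IsProbabilityMeasure μ] {s : Set Ω}
    {a b : ℝ≥0∞} (ha : μ s ≤ a) (hb : μ sᶜ ≤ b) (hab : a + b = 1) : μ s = a := by
  have hb_ne_top : b ≠ ∞ := ne_top_of_le_ne_top ENNReal.one_ne_top (hab ▸ le_add_self)
  refine le_antisymm ha ?_
  calc a = 1 - b := ENNReal.eq_sub_of_add_eq hb_ne_top hab
    _ ≤ 1 - μ sᶜ := tsub_le_tsub_left hb 1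
    _ ≤ μ s := tsub_le_iff_right.2 (measure_univ (μ := μ) ▸ measure_univ_le_add_compl s)

theorem MeasureTheory.measure_mem_finset_le {X : Ω → ℕ} {T : Finset ℕ} {p : ℝ≥0∞}
    (hX : ∀ t ∈ T, μ {ω | X ω = t} = p) : μ {ω | X ω ∈ T} ≤ #T * p := by
  calc μ {ω | X ω ∈ T} = μ (⋃ t ∈ T, {ω | X ω = t}) := by
        congr 1; ext ω; simp
    _ ≤ ∑ t ∈ T, μ {ω | X ω = t} := measure_biUnion_finset_le T _
    _ = #T * p := by rw [sum_congr rfl hX, sum_const, nsmul_eq_mul]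

theorem nullMeasurableSet_setOf_eq_of_eq_or_eq [IsFiniteMeasure μ] {α : Type*} [DecidableEq α]
    {K : Ω → α} {a b : α} (hK : ∀ ω, K ω = a ∨ K ω = b) (hab : a ≠ b)
    (h : μ {ω | K ω = a} + μ {ω | K ω = b} ≤ μ Set.univ) :
    ∀ m ∈ ({a, b} : Finset α), NullMeasurableSet {ω | K ω = m} μ := by
  have hcompl : {ω | K ω = a}ᶜ = {ω | K ω = b} := by
    ext ω
    simp only [Set.mem_compl_iff, Set.mem_ofPred_eq]
    rcases hK ω with h | h <;> simp [h, hab, hab.symm]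
  have ha : NullMeasurableSet {ω | K ω = a} μ := .of_measure_add_measure_compl_le (hcompl ▸ h)
  simp only [mem_insert, mem_singleton, forall_eq_or_imp, forall_eq]
  exact ⟨ha, hcompl ▸ ha.compl⟩

theorem ProbabilityTheory.iIndepFun.measure_preimage_zero_inter_biInter_succ {β : Type*}
    [MeasurableSpace β] {g : ℕ → Ω → β} (hg : iIndepFun g μ) {A : Set β} (hA : MeasurableSet A)
    {S : ℕ → Set β} (hS : ∀ l, MeasurableSet (S l)) (t : ℕ) :
    μ (g 0 ⁻¹' A ∩ ⋂ l ∈ range t, g (l + 1) ⁻¹' S l)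
      = μ (g 0 ⁻¹' A) * ∏ l ∈ range t, μ (g (l + 1) ⁻¹' S l) := by
  let F : ℕ → Set β := fun j => Nat.casesOn j A S
  have hF : ∀ j, MeasurableSet (F j) := fun j => by cases j <;> simp [F, hA, hS]
  have h := hg.meas_biInter (S := range (t + 1)) (s := fun j => g j ⁻¹' F j)
    fun j _ => ⟨F j, hF j, rfl⟩
  rw [prod_range_succ', mul_comm] at h
  have hset : g 0 ⁻¹' A ∩ ⋂ l ∈ range t, g (l + 1) ⁻¹' S l = ⋂ j ∈ range (t + 1), g j ⁻¹' F j := by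
    ext ω
    simp only [Set.mem_inter_iff, Set.mem_iInter, mem_range, Set.mem_preimage,
      Nat.forall_lt_succ_left]
    rfl
  rw [hset]
  exact h

section Uniform

variable {X : Ω → ℕ} {n : ℕ} (hn : 0 < n) (hX : ∀ t ∈ Icc 1 n, μ {ω | X ω = t} = 1 / n)
  (hrange : ∀ ω, X ω ∈ Icc 1 n) {i : ℕ} (hi : i ≤ n)
include hn hX hrange hi

theorem measure_le_le_of_uniform : μ {ω | X ω ≤ i} ≤ ENNReal.ofReal (i / n) :=
  calc μ {ω | X ω ≤ i} ≤ μ {ω | X ω ∈ Icc 1 i} :=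
        measure_mono fun ω hω => mem_Icc.2 ⟨(mem_Icc.1 (hrange ω)).1, hω⟩
    _ ≤ #(Icc 1 i) * (1 / n) :=
        measure_mem_finset_le fun t ht => hX t (Icc_subset_Icc_right hi ht)
    _ = ENNReal.ofReal (i / n) := by
        rw [Nat.card_Icc, Nat.add_sub_cancel, ENNReal.natCast_mul_one_div_natCast hn]

theorem measure_lt_le_of_uniform : μ {ω | i < X ω} ≤ ENNReal.ofReal (1 - i / n) :=
  calc μ {ω | i < X ω} ≤ μ {ω | X ω ∈ Ioc i n} :=
        measure_mono fun ω hω => mem_Ioc.2 ⟨hω, (mem_Icc.1 (hrange ω)).2⟩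
    _ ≤ #(Ioc i n) * (1 / n) :=
        measure_mem_finset_le fun t ht => hX t (mem_Icc.2 ⟨by grind, (mem_Ioc.1 ht).2⟩)
    _ = ENNReal.ofReal (1 - i / n) := by
        rw [Nat.card_Ioc, ENNReal.natCast_mul_one_div_natCast hn, Nat.cast_sub hi, sub_div,
          div_self (by positivity)]

theorem measure_lt_eq_of_uniform [IsProbabilityMeasure μ] :
    μ {ω | i < X ω} = ENNReal.ofReal (1 - i / n) := by
  refine measure_eq_of_le_of_measure_compl_le (measure_lt_le_of_uniform hn hX hrange hi) ?_
    (ENNReal.ofReal_one_sub_div_add_ofReal_div hi)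
  simpa only [Set.compl_ofPred, not_lt] using measure_le_le_of_uniform hn hX hrange hi

theorem nullMeasurableSet_lt_of_uniform [IsProbabilityMeasure μ] :
    NullMeasurableSet {ω | i < X ω} μ := by
  refine .of_measure_add_measure_compl_le ?_
  simp only [Set.compl_ofPred, not_lt, measure_univ]
  calc _ ≤ ENNReal.ofReal (1 - i / n) + ENNReal.ofReal (i / n) :=
        add_le_add (measure_lt_le_of_uniform hn hX hrange hi)
          (measure_le_le_of_uniform hn hX hrange hi)
    _ = 1 := ENNReal.ofReal_one_sub_div_add_ofReal_div hi

end Uniform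

section RandomMinimum

variable {K : Ω → ℕ} {X : ℕ → Ω → ℕ} {M : Finset ℕ} {i : ℕ}
  (hK : ∀ ω, K ω ∈ M) (hKm : ∀ m ∈ M, NullMeasurableSet {ω | K ω = m} μ)
  (hXm : ∀ l, NullMeasurableSet {ω | i < X l ω} μ)
include hK hKm hXm

theorem nullMeasurableSet_forall_lt_lt : NullMeasurableSet {ω | ∀ j < K ω, i < X j ω} μ := by
  rw [setOf_forall_lt_lt_eq_biUnion hK]
  exact M.nullMeasurableSet_biUnion fun m hm =>
    (hKm m hm).inter ((range m).nullMeasurableSet_biInter fun l _ => hXm l)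

theorem measure_forall_lt_lt_eq_sum {g : ℕ → Ω → ℕ} (hg : iIndepFun g μ) (hg0 : g 0 = K)
    (hgs : ∀ j, g (j + 1) = X j) {q : ℝ≥0∞} (hq : ∀ l, μ {ω | i < X l ω} = q) :
    μ {ω | ∀ j < K ω, i < X j ω} = ∑ m ∈ M, μ {ω | K ω = m} * q ^ m := by
  have hdisj : Set.Pairwise (↑M)
      (AEDisjoint μ on fun m => {ω | K ω = m} ∩ ⋂ l ∈ range m, {ω | i < X l ω}) :=
    fun m _ m' _ hmm' => Disjoint.aedisjoint <| Set.disjoint_left.2 fun ω hω hω' =>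
      hmm' (hω.1.symm.trans hω'.1)
  rw [setOf_forall_lt_lt_eq_biUnion hK, measure_biUnion_finset₀ hdisj fun m hm =>
    (hKm m hm).inter ((range m).nullMeasurableSet_biInter fun l _ => hXm l)]
  refine sum_congr rfl fun m _ => ?_
  have h := hg.measure_preimage_zero_inter_biInter_succ (measurableSet_singleton m)
    (fun _ => measurableSet_Ioi (a := i)) m
  simp only [hg0, hgs] at h
  calc _ = μ {ω | K ω = m} * ∏ l ∈ range m, μ {ω | i < X l ω} := h
    _ = μ {ω | K ω = m} * q ^ m := by rw [prod_congr rfl fun l _ => hq l, prod_const, card_range]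

end RandomMinimum

end

/-- **The choice distribution of the c-MultiQueue satisfies (☆) (Lemma 4).**
Let `iStar` be the minimum of `K` independent uniform samples `X 0, X 1, …`
from `{1,…,n}`, where `K = k` with probability `1-ε` and `K = k+1` with
probability `ε` (`k ≥ 1`, `ε ∈ [0,1)`, `k + ε > 1`), independent of the
samples.  Then `P[iStar ≤ i] = 1 - (1 - i/n)^k (1 - ε·i/n)` for every
`i ∈ {1,…,n}`, and `P[iStar ≤ i] > i/n` for every `i ∈ {1,…,n-1}`. -/
theorem c_multiqueue_satisfies_star (n : ℕ) (hn : 1 ≤ n)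
    (k : ℕ) (hk : 1 ≤ k) (ε : ℝ) (hε : ε ∈ Set.Ico (0 : ℝ) 1)
    (hkε : 1 < (k : ℝ) + ε)
    (Ω : Type*) [MeasureSpace Ω] [IsProbabilityMeasure (ℙ : Measure Ω)]
    (X : ℕ → Ω → ℕ) (K : Ω → ℕ)
    (g : ℕ → Ω → ℕ) (hg0 : g 0 = K) (hgs : ∀ j, g (j + 1) = X j)
    (hindep : iIndepFun g ℙ)
    (hX : ∀ j, ∀ i ∈ Finset.Icc 1 n, (ℙ {ω | X j ω = i}) = 1 / n)
    (hXrange : ∀ j ω, X j ω ∈ Finset.Icc 1 n)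
    (hKk : (ℙ {ω | K ω = k}) = ENNReal.ofReal (1 - ε))
    (hKk1 : (ℙ {ω | K ω = k + 1}) = ENNReal.ofReal ε)
    (hKrange : ∀ ω, K ω = k ∨ K ω = k + 1)
    (iStar : Ω → ℕ)
    (hiStar : ∀ ω, iStar ω = sInf {m | ∃ j < K ω, X j ω = m}) :
    (∀ i ∈ Finset.Icc 1 n,
        (ℙ {ω | iStar ω ≤ i})
          = ENNReal.ofReal (1 - (1 - (i : ℝ) / n) ^ k * (1 - ε * i / n))) ∧
      (∀ i ∈ Finset.Icc 1 (n - 1),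
        (i : ℝ) / n < (ℙ {ω | iStar ω ≤ i}).toReal) := by
  obtain ⟨hε0, hε1⟩ := hε
  have hM : ∀ ω, K ω ∈ ({k, k + 1} : Finset ℕ) := fun ω => by simpa using hKrange ω
  have hKm := nullMeasurableSet_setOf_eq_of_eq_or_eq hKrange (by omega) <| by
    rw [hKk, hKk1, ENNReal.ofReal_one_sub_add_ofReal hε0 hε1.le, measure_univ]
  have hmin : ∀ i, {ω | iStar ω ≤ i} = {ω | ∀ j < K ω, i < X j ω}ᶜ := fun i => by
    ext ω
    have hKpos : 0 < K ω := by rcases hKrange ω with h | h <;> omega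
    simp only [Set.mem_compl_iff, Set.mem_ofPred_eq, hiStar, ← Nat.lt_sInf_setOf_exists_iff hKpos,
      not_lt]
  have hcdf : ∀ i ∈ Finset.Icc 1 n, ℙ {ω | iStar ω ≤ i}
      = ENNReal.ofReal (1 - (1 - (i : ℝ) / n) ^ k * (1 - ε * i / n)) := by
    intro i hi
    have hin := (mem_Icc.1 hi).2
    have hXm := fun l => nullMeasurableSet_lt_of_uniform hn (hX l) (hXrange l) hin
    rw [hmin, prob_compl_eq_one_sub₀ (nullMeasurableSet_forall_lt_lt hM hKm hXm),
      measure_forall_lt_lt_eq_sum hM hKm hXm hindep hg0 hgs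
        fun l => measure_lt_eq_of_uniform hn (hX l) (hXrange l) hin,
      sum_pair (by omega), hKk, hKk1, mul_div_assoc,
      ENNReal.one_sub_ofReal_mul_pow_add_ofReal_mul_pow k hε0 hε1.le
        (div_le_one_of_le₀ (by exact_mod_cast hin) (by positivity))]
  refine ⟨hcdf, fun i hi => ?_⟩
  obtain ⟨hi1, hin⟩ := mem_Icc.1 hi
  have hx0 : (0 : ℝ) < i / n := by positivity
  have hx1 : (i : ℝ) / n < 1 := (div_lt_one (by positivity)).2 (by exact_mod_cast (by omega : i < n))
  have hlt := lt_one_sub_one_sub_pow_mul_one_sub_mul hx0 hx1 hk hε0 hkε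
  rw [hcdf i (mem_Icc.2 ⟨hi1, by omega⟩), mul_div_assoc, ENNReal.toReal_ofReal (hx0.trans hlt).le]
  exact hlt
end

section
/- η(d, i) = f_π(d)/n for every d ∈ [0,∞)^{n−1} and every i ∈ {1, …, n}. (Interpretation: η(d, i) is the intensity with which the transitional state (d, i) of the exponential-jump process is traversed when the starting differences are distributed with density f_π.) -/
open MeasureTheory Real Set

lemma aux_exp_Ioi (c : ℝ) (hc : 0 < c) :
    ∫ x in Set.Ioi (0:ℝ), Real.exp (-(c*x)) = 1/c := by
  have h := integral_comp_mul_left_Ioi (fun x => Real.exp (-x)) 0 hc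
  simp only [mul_zero, integral_exp_neg_Ioi, neg_zero, Real.exp_zero, smul_eq_mul,
    mul_one] at h
  rw [h, one_div]

lemma aux_exp_ab (c D : ℝ) (hc : c ≠ 0) :
    ∫ x in (0:ℝ)..D, Real.exp (c*x) = (Real.exp (c*D) - 1)/c := by
  have h := intervalIntegral.integral_comp_mul_left (a := (0:ℝ)) (b := D)
    (f := fun x => Real.exp x) hc
  simp only [mul_zero, integral_exp, smul_eq_mul, Real.exp_zero] at h
  rw [h]; ring

/-- **Intensity of transitional states of the exponential-jump process (Lemma 10).**
With `λ i = n·σ_{≤i} - i > 0`, `f_π` the product density of the exponential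
distributions `Exp(λ i)` and `e i` the `i`-th unit vector (convention `e n = 0`),
the intensity `η(d, i)` with which the transitional state `(d, i)` is traversed,
given by the recurrence below, satisfies `η(d, i) = f_π(d)/n` for every
`d ∈ [0,∞)^{n-1}` and every `i ∈ {1,…,n}`. -/
theorem ejp_transitional_intensity
    (n : ℕ) (hn : 1 ≤ n) (σ : ℕ → ℝ)
    (hσ0 : ∀ i ∈ Finset.Icc 1 n, 0 ≤ σ i)
    (hσ1 : ∑ i ∈ Finset.Icc 1 n, σ i = 1)
    (σle : ℕ → ℝ) (hσle : ∀ i, σle i = ∑ j ∈ Finset.Icc 1 i, σ j)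
    (hstar : ∀ i ∈ Finset.Icc 1 (n - 1), (i : ℝ) / n < σle i)
    (lam : ℕ → ℝ) (hlam : ∀ i, lam i = n * σle i - i)
    (fπ : (ℕ → ℝ) → ℝ)
    (hfπ : ∀ d : ℕ → ℝ,
      fπ d = ∏ i ∈ Finset.Icc 1 (n - 1), lam i * Real.exp (-(lam i * d i)))
    (e : ℕ → ℕ → ℝ)
    (he : ∀ i j, e i j = if j = i ∧ i ≤ n - 1 then 1 else 0)
    (η : (ℕ → ℝ) → ℕ → ℝ)
    (hη1 : ∀ d : ℕ → ℝ, (∀ j, 0 ≤ d j) →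
      η d 1 = σ 1 * ∫ x in Set.Ioi (0 : ℝ),
        fπ (fun j => d j + x * e 1 j) * Real.exp (-x))
    (hηi : ∀ d : ℕ → ℝ, (∀ j, 0 ≤ d j) → ∀ i, 2 ≤ i → i ≤ n →
      η d i = σ i * (∫ x in (0 : ℝ)..(d (i - 1)),
          fπ (fun j => d j + x * (e i j - e (i - 1) j)) * Real.exp (-x))
        + η (fun j => d j + d (i - 1) * (e i j - e (i - 1) j)) (i - 1)
            * Real.exp (-(d (i - 1))))
    (d : ℕ → ℝ) (hd : ∀ j, 0 ≤ d j) (i : ℕ) (hi : i ∈ Finset.Icc 1 n) :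
    η d i = fπ d / n := by
  have hn0 : (0:ℝ) < n := by positivity
  have hσlen : σle n = 1 := by rw [hσle]; exact hσ1
  -- (A) weighted sum of unit vector
  have hE : ∀ i, 1 ≤ i → i ≤ n →
      (∑ j ∈ Finset.Icc 1 (n-1), lam j * e i j) = lam i := by
    intro i h1 h2
    by_cases hle : i ≤ n - 1
    · have hcg : ∀ j ∈ Finset.Icc 1 (n-1), lam j * e i j
          = if j = i then lam i else 0 := by
        intro j hj
        rw [he]
        by_cases hji : j = i
        · simp [hji, hle]
        · simp [hji]
      rw [Finset.sum_congr rfl hcg, Finset.sum_ite_eq']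
      simp only [Finset.mem_Icc]
      rw [if_pos ⟨h1, hle⟩]
    · have h0 : ∀ j ∈ Finset.Icc 1 (n-1), lam j * e i j = 0 := by
        intro j hj; rw [he]; simp [hle]
      have hin : i = n := by omega
      rw [Finset.sum_eq_zero h0, hlam, hin, hσlen]
      ring
  -- (B) shift formula for fπ
  have hshift : ∀ dd c : ℕ → ℝ, fπ (fun j => dd j + c j)
      = fπ dd * Real.exp (-∑ j ∈ Finset.Icc 1 (n-1), lam j * c j) := by
    intro dd c
    rw [hfπ, hfπ]
    have h1 : ∀ j ∈ Finset.Icc 1 (n-1), lam j * Real.exp (-(lam j * (dd j + c j)))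
        = (lam j * Real.exp (-(lam j * dd j))) * Real.exp (-(lam j * c j)) := by
      intro j _
      rw [mul_add, neg_add, Real.exp_add]
      ring
    rw [Finset.prod_congr rfl h1, Finset.prod_mul_distrib, ← Real.exp_sum]
    congr 1
    rw [← Finset.sum_neg_distrib]
  -- sums of weighted shifts
  have hsum1 : ∀ x : ℝ, (∑ j ∈ Finset.Icc 1 (n-1), lam j * (x * e 1 j)) = x * lam 1 := by
    intro x
    have hc : ∀ j ∈ Finset.Icc 1 (n-1), lam j * (x * e 1 j) = x * (lam j * e 1 j) := by
      intro j _; ring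
    rw [Finset.sum_congr rfl hc, ← Finset.mul_sum, hE 1 le_rfl hn]
  have hsum2 : ∀ (x : ℝ) (k : ℕ), 1 ≤ k → k + 1 ≤ n →
      (∑ j ∈ Finset.Icc 1 (n-1), lam j * (x * (e (k+1) j - e k j)))
        = x * (lam (k+1) - lam k) := by
    intro x k h1 h2
    have hc : ∀ j ∈ Finset.Icc 1 (n-1), lam j * (x * (e (k+1) j - e k j))
        = x * (lam j * e (k+1) j) - x * (lam j * e k j) := by
      intro j _; ring
    rw [Finset.sum_congr rfl hc, Finset.sum_sub_distrib, ← Finset.mul_sum, ← Finset.mul_sum,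
      hE (k+1) (by omega) h2, hE k h1 (by omega), ← mul_sub]
  -- gap between consecutive lambdas
  have hgap : ∀ k : ℕ, lam (k+1) - lam k = n * σ (k+1) - 1 := by
    intro k
    rw [hlam, hlam, hσle, hσle, Finset.sum_Icc_succ_top (by omega : 1 ≤ k+1)]
    push_cast
    ring
  -- positivity of σ 1
  have hσle1 : σle 1 = σ 1 := by rw [hσle]; simp
  have hσ1pos : 0 < σ 1 := by
    by_cases hone : n = 1
    · subst hone
      rw [hσle1] at hσlen
      linarith
    · have h2 : 1 ≤ n - 1 := by omega
      have hs := hstar 1 (Finset.mem_Icc.mpr ⟨le_rfl, h2⟩)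
      rw [hσle1] at hs
      have hpos : (0:ℝ) < 1 / n := by positivity
      push_cast at hs
      linarith
  have hlam1 : lam 1 = n * σ 1 - 1 := by
    rw [hlam, hσle1]; norm_num
  -- main induction
  have key : ∀ m, 1 ≤ m → m ≤ n → ∀ dd : ℕ → ℝ, (∀ j, 0 ≤ dd j) → η dd m = fπ dd / n := by
    intro m
    induction m with
    | zero => intro h; exact absurd h (by omega)
    | succ k ih =>
      intro h1 h2 dd hdd
      by_cases hk0 : k = 0
      · subst hk0
        show η dd 1 = fπ dd / n
        rw [hη1 dd hdd]
        have hfun : (fun x => fπ (fun j => dd j + x * e 1 j) * Real.exp (-x))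
            = fun x => fπ dd * Real.exp (-((lam 1 + 1) * x)) := by
          funext x
          rw [hshift dd (fun j => x * e 1 j), hsum1 x, mul_assoc, ← Real.exp_add]
          congr 2
          ring
        rw [hfun, MeasureTheory.integral_const_mul,
          aux_exp_Ioi (lam 1 + 1)
            (by rw [hlam1]; have := mul_pos hn0 hσ1pos; linarith)]
        rw [hlam1]
        have hnσ : (n:ℝ) * σ 1 ≠ 0 := ne_of_gt (mul_pos hn0 hσ1pos)
        field_simp
        ring
      · have hk1 : 1 ≤ k := by omega
        rw [hηi dd hdd (k+1) (by omega) h2]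
        simp only [Nat.add_sub_cancel]
        have hgapk : lam (k+1) - lam k = (n:ℝ) * σ (k+1) - 1 := hgap k
        -- pointwise factorization
        have hfac : ∀ x : ℝ, fπ (fun j => dd j + x * (e (k+1) j - e k j))
            = fπ dd * Real.exp (x * (1 - (n:ℝ) * σ (k+1))) := by
          intro x
          rw [hshift dd _, hsum2 x k hk1 h2, hgapk]
          congr 1
          ring
        -- first integral
        have hInt : (∫ x in (0:ℝ)..(dd k),
              fπ (fun j => dd j + x * (e (k+1) j - e k j)) * Real.exp (-x))
            = fπ dd * ∫ x in (0:ℝ)..(dd k), Real.exp (-((n:ℝ) * σ (k+1)) * x) := by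
          rw [← intervalIntegral.integral_const_mul]
          apply intervalIntegral.integral_congr
          intro x _
          dsimp only
          rw [hfac x, mul_assoc, ← Real.exp_add]
          congr 2
          ring
        have hterm1 : σ (k+1) * (∫ x in (0:ℝ)..(dd k),
              fπ (fun j => dd j + x * (e (k+1) j - e k j)) * Real.exp (-x))
            = fπ dd * ((1 - Real.exp (-((n:ℝ) * σ (k+1)) * dd k)) / n) := by
          rw [hInt]
          by_cases hs0 : σ (k+1) = 0
          · simp [hs0]
          · have hcne : -((n:ℝ) * σ (k+1)) ≠ 0 :=
              neg_ne_zero.mpr (mul_ne_zero (ne_of_gt hn0) hs0)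
            rw [aux_exp_ab _ _ hcne]
            field_simp
            ring
        -- nonnegativity of shifted point
        have hd' : ∀ j, 0 ≤ dd j + dd k * (e (k+1) j - e k j) := by
          intro j
          rw [he, he]
          by_cases hc1 : j = k + 1 ∧ k + 1 ≤ n - 1
          · have hc2 : ¬(j = k ∧ k ≤ n - 1) := by omega
            rw [if_pos hc1, if_neg hc2]
            have := hdd j; have := hdd k; linarith
          · rw [if_neg hc1]
            by_cases hc2 : j = k ∧ k ≤ n - 1
            · rw [if_pos hc2]
              have hjk : j = k := hc2.1
              subst hjk
              have := hdd j; linarith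
            · rw [if_neg hc2]
              simpa using hdd j
        have hIH := ih hk1 (by omega) (fun j => dd j + dd k * (e (k+1) j - e k j)) hd'
        rw [hterm1, hIH, hfac (dd k)]
        rw [show Real.exp (dd k * (1 - (n:ℝ) * σ (k+1)))
            = Real.exp (-((n:ℝ) * σ (k+1)) * dd k) * Real.exp (dd k) from by
          rw [← Real.exp_add]; congr 1; ring]
        rw [Real.exp_neg (dd k)]
        have hexp := Real.exp_ne_zero (dd k)
        field_simp
        ring_nf
  have hm := Finset.mem_Icc.mp hi
  exact key i hm.1 hm.2 d hd
end
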